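/- arXiv:1508.05534 — 7 statements merged into one kernel-verified Lean document; each statement's English description precedes it below -/
import Mathlib

section
/- Let p be an odd prime, and let m, n ≥ 0 and r ≥ 1 be integers with p^r > m. Then N_{r'}(m,n) = N_r(m,n) for every integer r' ≥ r; that is, the counting function N_r(m,n) stabilizes once p^r > m. -/
/-- The set `S_r(m,n)` of solutions of the linear system, encoded as pairs of
finitely supported sequences `(a, b) : (ℕ → ℕ) × (ℕ → ℕ)` where index `i`
(for `0 ≤ i < r`) corresponds to `a_{i+1}`, `b_{i+1}`. -/
def SolSet (p r m n : ℕ) : Set ((ℕ → ℕ) × (ℕ → ℕ)) :=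
  {ab | (∀ i, r ≤ i → ab.1 i = 0) ∧ (∀ i, r ≤ i → ab.2 i = 0) ∧
        (∀ i, ab.2 i ≤ 1) ∧
        2 * (∑ i ∈ Finset.range r, ab.1 i) + ∑ i ∈ Finset.range r, ab.2 i = n ∧
        ab.2 0 + ∑ i ∈ Finset.range r, (ab.1 i + ab.2 (i + 1)) * p ^ (i + 1) = m}

/-- `N_r(m,n)`, the number of solutions of the linear system. -/
noncomputable def Ncard (p r m n : ℕ) : ℕ := Nat.card (SolSet p r m n)

/-- The stable value `N(m,n)` (for `p ≥ 2` one has `p ^ (m+1) > m`, so `r = m + 1`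
is in the stable range), with the convention that it vanishes for negative arguments. -/
noncomputable def Nstab (p : ℕ) (m n : ℤ) : ℕ :=
  if 0 ≤ m ∧ 0 ≤ n then Ncard p (m.toNat + 1) m.toNat n.toNat else 0

/-!
A solution of `S_{r'}(m,n)` writes `m = Σ_j c_j p^j` with nonnegative digits `c_0 = b_1` and
`c_{i+1} = a_{i+1} + b_{i+2}` (0-indexed: `a i + b (i + 1)`). Each term `c_j p^j` is at most `m`,
so `m < p^r` forces `c_j = 0` for `j ≥ r`: all `a_i`, `b_i` with index `≥ r` vanish, and the
solution already lies in `S_r(m,n)`. Conversely, padding a solution of `S_r(m,n)` by zeros gives a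
solution of `S_{r'}(m,n)`.
-/

open Finset

theorem sum_range_eq_of_le_of_eq_zero {M : Type*} [AddCommMonoid M] {f : ℕ → M} {r r' : ℕ}
    (hr : r ≤ r') (hf : ∀ i, r ≤ i → f i = 0) :
    ∑ i ∈ range r', f i = ∑ i ∈ range r, f i :=
  (sum_subset (range_subset_range.mpr hr) fun i _ hi => hf i (by simpa using hi)).symm

namespace SolSet

variable {p r r' m n : ℕ} {ab : (ℕ → ℕ) × (ℕ → ℕ)}

theorem mem_iff_of_le (hr : r ≤ r') (ha : ∀ i, r ≤ i → ab.1 i = 0)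
    (hb : ∀ i, r ≤ i → ab.2 i = 0) : ab ∈ SolSet p r' m n ↔ ab ∈ SolSet p r m n := by
  have ha' := sum_range_eq_of_le_of_eq_zero hr ha
  have hb' := sum_range_eq_of_le_of_eq_zero hr hb
  have hm := sum_range_eq_of_le_of_eq_zero (f := fun i => (ab.1 i + ab.2 (i + 1)) * p ^ (i + 1)) hr
    fun i hi => by simp [ha i hi, hb (i + 1) (by omega)]
  simp only [SolSet, Set.mem_ofPred_eq, ha', hb', hm]
  exact ⟨fun ⟨_, _, h⟩ => ⟨ha, hb, h⟩,
    fun ⟨_, _, h⟩ => ⟨fun i hi => ha i (hr.trans hi), fun i hi => hb i (hr.trans hi), h⟩⟩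

theorem digit_mul_pow_le (hab : ab ∈ SolSet p r m n) (i : ℕ) :
    (ab.1 i + ab.2 (i + 1)) * p ^ (i + 1) ≤ m := by
  obtain ⟨ha, hb, -, -, hm⟩ := hab
  rcases lt_or_ge i r with hi | hi
  · calc (ab.1 i + ab.2 (i + 1)) * p ^ (i + 1)
        ≤ ∑ j ∈ range r, (ab.1 j + ab.2 (j + 1)) * p ^ (j + 1) :=
          single_le_sum (f := fun j => (ab.1 j + ab.2 (j + 1)) * p ^ (j + 1))
            (fun _ _ => Nat.zero_le _) (mem_range.mpr hi)
      _ ≤ m := hm ▸ Nat.le_add_left _ _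
  · simp [ha i hi, hb (i + 1) (by omega)]

theorem eq_zero_of_lt_pow (hp : 0 < p) (hpr : m < p ^ r) (hab : ab ∈ SolSet p r' m n) :
    (∀ i, r ≤ i → ab.1 i = 0) ∧ (∀ i, r ≤ i → ab.2 i = 0) := by
  have digit_eq_zero : ∀ c j, c * p ^ j ≤ m → r ≤ j → c = 0 := fun c j hc hj => by
    have := Nat.pow_le_pow_right hp hj
    by_contra hc0
    have := Nat.le_mul_of_pos_left (p ^ j) (Nat.pos_of_ne_zero hc0)
    omega
  refine ⟨fun i hi => ?_, fun j hj => ?_⟩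
  · have := digit_eq_zero _ _ (digit_mul_pow_le hab i) (by omega)
    omega
  · cases j with
    | zero =>
      exact digit_eq_zero _ 0 (by simpa using (Nat.le_add_right _ _).trans_eq hab.2.2.2.2) hj
    | succ i =>
      have := digit_eq_zero _ _ (digit_mul_pow_le hab i) hj
      omega

theorem eq_of_lt_pow (hp : 0 < p) (hpr : m < p ^ r) (hr : r ≤ r') :
    SolSet p r' m n = SolSet p r m n := by
  ext ab
  constructor
  · intro hab
    obtain ⟨ha, hb⟩ := eq_zero_of_lt_pow hp hpr hab
    exact (mem_iff_of_le hr ha hb).mp hab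
  · intro hab
    exact (mem_iff_of_le hr hab.1 hab.2.1).mpr hab

end SolSet

theorem stmt2_general (p : ℕ) (hp : p.Prime) (m n r : ℕ)
    (hpr : m < p ^ r) (r' : ℕ) (hr' : r ≤ r') :
    Ncard p r' m n = Ncard p r m n := by
  rw [Ncard, Ncard, SolSet.eq_of_lt_pow hp.pos hpr hr']

/-- for an odd prime `p` and `p ^ r > m`, the counting function
`N_r(m,n)` stabilizes: `N_{r'}(m,n) = N_r(m,n)` for all `r' ≥ r`. -/
theorem stmt2 (p : ℕ) (hp : p.Prime) (hodd : Odd p) (m n r : ℕ) (hr : 1 ≤ r)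
    (hpr : m < p ^ r) (r' : ℕ) (hr' : r ≤ r') :
    Ncard p r' m n = Ncard p r m n :=
  stmt2_general p hp m n r hpr r' hr'
end

section
/- Let p be an odd prime and m, n ≥ 0 integers with p dividing m. Then N(m,n) = 0 whenever n > 2m/p, and N(m,n) = 1 when n = 2m/p. -/
open Finset

lemma mul_sum_le_sum_mul_pow_succ (f : ℕ → ℕ) (p r : ℕ) :
    p * ∑ i ∈ range r, f i ≤ ∑ i ∈ range r, f i * p ^ (i + 1) := by
  rw [mul_sum]
  refine sum_le_sum fun i _ => ?_
  rw [mul_comm]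
  exact Nat.mul_le_mul_left _ (Nat.le_self_pow i.succ_ne_zero p)

lemma eq_zero_of_sum_mul_pow_succ_eq_mul_sum {f : ℕ → ℕ} {p r i : ℕ} (hp : 1 < p)
    (h : ∑ i ∈ range r, f i * p ^ (i + 1) = p * ∑ i ∈ range r, f i)
    (hi : i ≠ 0) (hir : i < r) : f i = 0 := by
  have hle : ∀ j ∈ range r, f j * p ≤ f j * p ^ (j + 1) := fun j _ => by
    gcongr
    exact Nat.le_self_pow j.succ_ne_zero p
  rw [mul_sum] at h
  simp_rw [mul_comm p] at h
  have hi_eq := (sum_eq_sum_iff_of_le hle).mp h.symm i (mem_range.mpr hir)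
  exact (mul_eq_mul_left_iff.mp hi_eq).resolve_left (lt_self_pow₀ hp (by omega)).ne

namespace SolSet

variable {p r k n : ℕ} {ab : (ℕ → ℕ) × (ℕ → ℕ)}

lemma snd_zero_eq_zero (hp : 1 < p) (h : ab ∈ SolSet p r (p * k) n) : ab.2 0 = 0 := by
  obtain ⟨-, -, hb1, -, hm⟩ := h
  have hdvd : p ∣ ∑ i ∈ range r, (ab.1 i + ab.2 (i + 1)) * p ^ (i + 1) :=
    dvd_sum fun i _ => (dvd_pow_self p i.succ_ne_zero).mul_left _
  have hb0 : p ∣ ab.2 0 := (Nat.dvd_add_left hdvd).mp (hm ▸ dvd_mul_right p k)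
  exact Nat.eq_zero_of_dvd_of_lt hb0 (by have := hb1 0; omega)

lemma sum_fst_add_snd_succ (hp : 1 < p) (h : ab ∈ SolSet p r (p * k) n) :
    ∑ i ∈ range r, (ab.1 i + ab.2 (i + 1)) =
      ∑ i ∈ range r, ab.1 i + ∑ i ∈ range r, ab.2 i := by
  have hshift : ∑ i ∈ range r, ab.2 (i + 1) = ∑ i ∈ range r, ab.2 i := by
    have h₁ := sum_range_succ' ab.2 r
    have h₂ := sum_range_succ ab.2 r
    rw [snd_zero_eq_zero hp h] at h₁
    rw [h.2.1 r le_rfl] at h₂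
    omega
  rw [sum_add_distrib, hshift]

lemma sum_fst_add_sum_snd_le (hp : 1 < p) (h : ab ∈ SolSet p r (p * k) n) :
    ∑ i ∈ range r, ab.1 i + ∑ i ∈ range r, ab.2 i ≤ k := by
  have hm := h.2.2.2.2
  rw [snd_zero_eq_zero hp h, zero_add] at hm
  refine Nat.le_of_mul_le_mul_left ?_ (by omega : 0 < p)
  rw [← sum_fst_add_snd_succ hp h, ← hm]
  exact mul_sum_le_sum_mul_pow_succ _ p r

lemma eq_empty_of_two_mul_lt (hp : 1 < p) (hn : 2 * k < n) : SolSet p r (p * k) n = ∅ := by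
  refine Set.eq_empty_of_forall_notMem fun ab h => ?_
  have := sum_fst_add_sum_snd_le hp h
  have := h.2.2.2.1
  omega

lemma mem_of_pi_single (hr : 0 < r) : (Pi.single 0 k, 0) ∈ SolSet p r (p * k) (2 * k) := by
  refine ⟨fun i hi => ?_, fun _ _ => rfl, fun _ => zero_le_one, ?_, ?_⟩
  · exact Pi.single_eq_of_ne (show i ≠ 0 by omega) _
  · simp [sum_pi_single', hr]
  · simp only [Pi.zero_apply, add_zero, zero_add]
    rw [sum_eq_single_of_mem 0 (mem_range.mpr hr) fun i _ hi => by simp [Pi.single_eq_of_ne hi]]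
    simp [mul_comm]

lemma eq_of_mem_two_mul (hp : 1 < p) (h : ab ∈ SolSet p r (p * k) (2 * k)) :
    ab = (Pi.single 0 k, 0) := by
  have hAB := sum_fst_add_sum_snd_le hp h
  obtain ⟨ha, hb, -, hn, hm⟩ := h
  have hB : ∑ i ∈ range r, ab.2 i = 0 := by omega
  have hb_zero : ∀ i, ab.2 i = 0 := fun i => by
    rcases Nat.lt_or_ge i r with hi | hi
    · exact sum_eq_zero_iff.mp hB i (mem_range.mpr hi)
    · exact hb i hi
  have ha_zero : ∀ i, i ≠ 0 → ab.1 i = 0 := fun i hi0 => by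
    rcases Nat.lt_or_ge i r with hi | hi
    · have hsum : ∑ i ∈ range r, ab.1 i * p ^ (i + 1) = p * ∑ i ∈ range r, ab.1 i := by
        simpa [hb_zero, show ∑ i ∈ range r, ab.1 i = k by omega] using hm
      exact eq_zero_of_sum_mul_pow_succ_eq_mul_sum hp hsum hi0 hi
    · exact ha i hi
  have ha0 : ab.1 0 = k := by
    rcases Nat.eq_zero_or_pos r with rfl | hr
    · simp only [range_zero, sum_empty] at hn
      rw [ha 0 le_rfl]
      omega
    rw [← sum_eq_single_of_mem 0 (mem_range.mpr hr) fun i _ hi => ha_zero i hi]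
    omega
  ext i
  · rcases eq_or_ne i 0 with rfl | hi
    · simp [ha0]
    · simp [hi, ha_zero i hi]
  · exact hb_zero i

lemma eq_singleton (hp : 1 < p) (hr : 0 < r) :
    SolSet p r (p * k) (2 * k) = {(Pi.single 0 k, 0)} :=
  Set.eq_singleton_iff_unique_mem.mpr ⟨mem_of_pi_single hr, fun _ h => eq_of_mem_two_mul hp h⟩

end SolSet

lemma Nstab_natCast (p m n : ℕ) : Nstab p m n = Ncard p (m + 1) m n := by
  simp [Nstab]

theorem stmt5_general (p : ℕ) (hp : p.Prime) (m n : ℕ) (hdvd : p ∣ m) :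
    (2 * m / p < n → Nstab p (m : ℤ) (n : ℤ) = 0) ∧
    (n = 2 * m / p → Nstab p (m : ℤ) (n : ℤ) = 1) := by
  obtain ⟨k, rfl⟩ := hdvd
  rw [Nat.mul_left_comm, Nat.mul_div_cancel_left _ hp.pos, Nstab_natCast, Ncard]
  refine ⟨fun hn => ?_, fun hn => ?_⟩
  · rw [SolSet.eq_empty_of_two_mul_lt hp.one_lt hn]
    simp
  · rw [hn, SolSet.eq_singleton hp.one_lt (p * k).succ_pos]
    simp

/-- for an odd prime `p` with `p ∣ m`, `N(m,n) = 0` when `n > 2m/p`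
and `N(m,n) = 1` when `n = 2m/p`. -/
theorem stmt5 (p : ℕ) (hp : p.Prime) (hodd : Odd p) (m n : ℕ) (hdvd : p ∣ m) :
    (2 * m / p < n → Nstab p (m : ℤ) (n : ℤ) = 0) ∧
    (n = 2 * m / p → Nstab p (m : ℤ) (n : ℤ) = 1) :=
  stmt5_general p hp m n hdvd
end

section
/- Let p be an odd prime and m, n ≥ 0 integers. If p divides m, then N(m,n) = N(m − p, n − 2) + N(m/p, n); if m ≡ 1 (mod p), then N(m,n) = N(m − p, n − 2) + N((m−1)/p, n − 1). (Here terms with negative first argument, and N(·, n') with n' < 0, are 0 by convention.) -/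
/-!
Split the solutions according to whether `a₁ = 0`. Lowering `a₁` by one is a bijection from the
solutions with `a₁ ≠ 0` onto those for `(m - p, n - 2)`. For the solutions with `a₁ = 0`, the weight
equation modulo `p` forces `b₁ = m % p =: c`, so `(a₁, b₁) = (0, c)` is determined and dropping it
is a bijection onto the solutions for `((m - c) / p, n - c)`. Since `S_r(m, n)` does not depend on
`r` once `m < p ^ r`, all three counts can be taken with the same large `r`.
-/

open Finset

theorem finite_setOf_le_of_support (r N : ℕ) :
    {f : ℕ → ℕ | ∀ i, f i ≤ N ∧ (r ≤ i → f i = 0)}.Finite := by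
  refine (Set.finite_range fun (g : Fin r → Fin (N + 1)) (i : ℕ) =>
    if h : i < r then (g ⟨i, h⟩ : ℕ) else 0).subset fun f hf => ?_
  refine ⟨fun i => ⟨f i, Nat.lt_succ_of_le (hf i).1⟩, funext fun i => ?_⟩
  dsimp only
  split_ifs with h
  · rfl
  · exact ((hf i).2 (not_lt.mp h)).symm

namespace SolSet

def Admissible (r : ℕ) (s : (ℕ → ℕ) × (ℕ → ℕ)) : Prop :=
  (∀ i, r ≤ i → s.1 i = 0) ∧ (∀ i, r ≤ i → s.2 i = 0) ∧ ∀ i, s.2 i ≤ 1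

def size (r : ℕ) (s : (ℕ → ℕ) × (ℕ → ℕ)) : ℕ :=
  2 * (∑ i ∈ range r, s.1 i) + ∑ i ∈ range r, s.2 i

def weight (p r : ℕ) (s : (ℕ → ℕ) × (ℕ → ℕ)) : ℕ :=
  s.2 0 + ∑ i ∈ range r, (s.1 i + s.2 (i + 1)) * p ^ (i + 1)

def tail (s : (ℕ → ℕ) × (ℕ → ℕ)) : (ℕ → ℕ) × (ℕ → ℕ) :=
  (fun i => s.1 (i + 1), fun i => s.2 (i + 1))

def cons (x y : ℕ) (t : (ℕ → ℕ) × (ℕ → ℕ)) : (ℕ → ℕ) × (ℕ → ℕ) :=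
  (fun | 0 => x | i + 1 => t.1 i, fun | 0 => y | i + 1 => t.2 i)

variable {p r m n q c x y : ℕ} {s t : (ℕ → ℕ) × (ℕ → ℕ)}

theorem mem_iff : s ∈ SolSet p r m n ↔ Admissible r s ∧ size r s = n ∧ weight p r s = m := by
  simp only [Admissible, size, weight, and_assoc]
  rfl

@[simp] theorem cons_fst_zero : (cons x y t).1 0 = x := rfl
@[simp] theorem cons_snd_zero : (cons x y t).2 0 = y := rfl
@[simp] theorem tail_cons : tail (cons x y t) = t := rfl

theorem cons_eta (s : (ℕ → ℕ) × (ℕ → ℕ)) : cons (s.1 0) (s.2 0) (tail s) = s := by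
  ext (_ | i) <;> rfl

theorem admissible_cons_iff : Admissible (r + 1) (cons x y t) ↔ y ≤ 1 ∧ Admissible r t := by
  constructor
  · rintro ⟨ha, hb, hb1⟩
    exact ⟨hb1 0, fun i hi => ha (i + 1) (by omega), fun i hi => hb (i + 1) (by omega),
      fun i => hb1 (i + 1)⟩
  · rintro ⟨hy, ha, hb, hb1⟩
    refine ⟨?_, ?_, ?_⟩
    · rintro (_ | i) hi
      exacts [absurd hi (by omega), ha i (by omega)]
    · rintro (_ | i) hi
      exacts [absurd hi (by omega), hb i (by omega)]
    · rintro (_ | i)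
      exacts [hy, hb1 i]

theorem size_cons : size (r + 1) (cons x y t) = 2 * x + y + size r t := by
  simp only [size, sum_range_succ', cons]
  ring

theorem weight_cons : weight p (r + 1) (cons x y t) = y + p * (x + weight p r t) := by
  have shift : ∑ i ∈ range r, (t.1 i + t.2 (i + 1)) * p ^ (i + 1 + 1) =
      p * ∑ i ∈ range r, (t.1 i + t.2 (i + 1)) * p ^ (i + 1) := by
    rw [mul_sum]
    exact sum_congr rfl fun i _ => by ring
  simp only [weight, sum_range_succ', cons]
  rw [shift]
  ring

theorem size_succ : size (r + 1) s = size r s + 2 * s.1 r + s.2 r := by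
  simp only [size, sum_range_succ]
  ring

theorem weight_succ :
    weight p (r + 1) s = weight p r s + (s.1 r + s.2 (r + 1)) * p ^ (r + 1) := by
  simp only [weight, sum_range_succ]
  ring

theorem snd_mul_pow_le_weight (s : (ℕ → ℕ) × (ℕ → ℕ)) : s.2 r * p ^ r ≤ weight p r s := by
  cases r with
  | zero => simp [weight]
  | succ r => rw [weight_succ, add_mul]; omega

theorem finite (p r m n : ℕ) : (SolSet p r m n).Finite := by
  refine ((finite_setOf_le_of_support r n).prod (finite_setOf_le_of_support r 1)).subset
    fun s hs => ?_
  obtain ⟨⟨ha, hb, hb1⟩, hn, -⟩ := mem_iff.mp hs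
  refine ⟨fun i => ⟨?_, ha i⟩, fun i => ⟨hb1 i, hb i⟩⟩
  by_cases hi : i < r
  · have := single_le_sum (fun j _ => Nat.zero_le (s.1 j)) (mem_range.2 hi)
    rw [size] at hn
    omega
  · rw [ha i (not_lt.mp hi)]
    exact Nat.zero_le n

theorem ncard_eq_ncard_sep_add_ncard_sep (p r m n : ℕ) :
    (SolSet p r m n).ncard =
      {s ∈ SolSet p r m n | s.1 0 ≠ 0}.ncard + {s ∈ SolSet p r m n | s.1 0 = 0}.ncard := by
  rw [add_comm]
  exact (Set.ncard_inter_add_ncard_sdiff_eq_ncard _ {s | s.1 0 = 0} (finite p r m n)).symm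

theorem succ_eq_of_lt_pow (hp : 0 < p) (h : m < p ^ r) :
    SolSet p (r + 1) m n = SolSet p r m n := by
  ext s
  simp only [mem_iff, Admissible, size_succ, weight_succ]
  constructor
  · rintro ⟨⟨ha, hb, hb1⟩, hn, hm⟩
    have hbr1 := hb (r + 1) (by omega)
    have hpow : p ^ r ≤ p ^ (r + 1) := Nat.pow_le_pow_right hp (by omega)
    have har : s.1 r = 0 := by
      rw [add_mul] at hm
      exact Nat.lt_one_iff.mp (Nat.lt_of_mul_lt_mul_right (a := p ^ (r + 1)) (by omega))
    have hbr : s.2 r = 0 := by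
      have := snd_mul_pow_le_weight (p := p) (r := r) s
      exact Nat.lt_one_iff.mp (Nat.lt_of_mul_lt_mul_right (a := p ^ r) (by omega))
    refine ⟨⟨fun i hi => ?_, fun i hi => ?_, hb1⟩, by omega, by simpa [har, hbr1] using hm⟩
    · rcases hi.eq_or_lt with rfl | hi
      exacts [har, ha i hi]
    · rcases hi.eq_or_lt with rfl | hi
      exacts [hbr, hb i hi]
  · rintro ⟨⟨ha, hb, hb1⟩, hn, hm⟩
    refine ⟨⟨fun i hi => ha i (by omega), fun i hi => hb i (by omega), hb1⟩, ?_, ?_⟩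
    · rw [ha r le_rfl, hb r le_rfl]
      omega
    · rw [ha r le_rfl, hb (r + 1) (by omega)]
      simpa using hm

theorem eq_of_lt_pow_of_le (hp : 0 < p) (h : m < p ^ r) {r' : ℕ} (hr : r ≤ r') :
    SolSet p r' m n = SolSet p r m n := by
  induction r', hr using Nat.le_induction with
  | base => rfl
  | succ k hk ih => rw [succ_eq_of_lt_pow hp (h.trans_le (Nat.pow_le_pow_right hp hk)), ih]

theorem snd_zero_eq_mod (hp : 1 < p) (hs : s ∈ SolSet p r m n) : s.2 0 = m % p := by
  obtain ⟨⟨-, -, hb1⟩, -, hm⟩ := mem_iff.mp hs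
  obtain ⟨k, hk⟩ : p ∣ ∑ i ∈ range r, (s.1 i + s.2 (i + 1)) * p ^ (i + 1) :=
    dvd_sum fun i _ => (dvd_pow_self p i.succ_ne_zero).mul_left _
  rw [← hm, weight, hk, Nat.add_mul_mod_self_left, Nat.mod_eq_of_lt ((hb1 0).trans_lt hp)]

theorem cons_add_one_mem_iff :
    cons (x + 1) y t ∈ SolSet p (r + 1) (m + p) (n + 2) ↔ cons x y t ∈ SolSet p (r + 1) m n := by
  simp only [mem_iff, admissible_cons_iff, size_cons, weight_cons, mul_add, mul_one]
  constructor <;> rintro ⟨h, hn, hm⟩ <;> exact ⟨h, by omega, by omega⟩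

theorem cons_zero_mem_iff (hp : 0 < p) :
    cons 0 y t ∈ SolSet p (r + 1) (y + p * m) (n + y) ↔ y ≤ 1 ∧ t ∈ SolSet p r m n := by
  simp only [mem_iff, admissible_cons_iff, size_cons, weight_cons, zero_add, add_right_inj,
    mul_right_inj' hp.ne', and_assoc]
  constructor <;> rintro ⟨hy, h, hn, hm⟩ <;> exact ⟨hy, h, by omega, hm⟩

theorem ncard_sep_fst_zero_ne_zero (p r m n : ℕ) :
    {s ∈ SolSet p (r + 1) (m + p) (n + 2) | s.1 0 ≠ 0}.ncard = (SolSet p (r + 1) m n).ncard := by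
  refine Set.BijOn.ncard_eq (f := fun s => cons (s.1 0 - 1) (s.2 0) (tail s))
    (Set.InvOn.bijOn (f' := fun s => cons (s.1 0 + 1) (s.2 0) (tail s)) ⟨?_, ?_⟩ ?_ ?_)
  · rintro s ⟨-, h0⟩
    simp only [cons_fst_zero, cons_snd_zero, tail_cons, Nat.sub_add_cancel (Nat.pos_of_ne_zero h0),
      cons_eta]
  · intro t _
    simp only [cons_fst_zero, cons_snd_zero, tail_cons, Nat.add_sub_cancel, cons_eta]
  · rintro s ⟨hs, h0⟩
    obtain ⟨x, hx⟩ := Nat.exists_eq_add_of_le' (Nat.pos_of_ne_zero h0)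
    rw [← cons_eta s, hx, cons_add_one_mem_iff] at hs
    simpa [hx] using hs
  · intro t ht
    refine ⟨?_, by simp⟩
    rwa [cons_add_one_mem_iff, cons_eta]

theorem ncard_sep_fst_zero_eq_zero (hp : 1 < p) (hc : c ≤ 1) :
    {s ∈ SolSet p (r + 1) (c + p * q) (n + c) | s.1 0 = 0}.ncard = (SolSet p r q n).ncard := by
  have hcons : ∀ s ∈ {s ∈ SolSet p (r + 1) (c + p * q) (n + c) | s.1 0 = 0},
      cons 0 c (tail s) = s := by
    rintro s ⟨hs, h0⟩
    have hb0 := snd_zero_eq_mod hp hs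
    rw [Nat.add_mul_mod_self_left, Nat.mod_eq_of_lt (hc.trans_lt hp)] at hb0
    conv_rhs => rw [← cons_eta s]
    rw [h0, hb0]
  refine Set.BijOn.ncard_eq (Set.InvOn.bijOn (f := tail) (f' := cons 0 c) ⟨hcons, fun t _ => rfl⟩
    ?_ fun t ht => ⟨(cons_zero_mem_iff (by omega)).mpr ⟨hc, ht⟩, rfl⟩)
  intro s hs
  have hmem := hs.1
  rw [← hcons s hs, cons_zero_mem_iff (by omega)] at hmem
  exact hmem.2

end SolSet

theorem Nstab_natCast_eq_ncard {p r m n : ℕ} (hp : 1 < p) (h : m < p ^ r) :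
    Nstab p m n = (SolSet p r m n).ncard := by
  have hm : m < p ^ (m + 1) := (Nat.lt_succ_self m).trans (Nat.lt_pow_self hp)
  rw [Nstab, if_pos ⟨by positivity, by positivity⟩, Int.toNat_natCast, Int.toNat_natCast, Ncard,
    Nat.card_coe_set_eq]
  rcases le_total r (m + 1) with hr | hr
  · rw [SolSet.eq_of_lt_pow_of_le (by omega) h hr]
  · rw [SolSet.eq_of_lt_pow_of_le (by omega) hm hr]

theorem Nstab_sub_sub_eq_ncard {p r m n : ℕ} (hp : 1 < p) (hm : m < p ^ (r + 1)) :
    Nstab p (m - p) (n - 2) = {s ∈ SolSet p (r + 1) m n | s.1 0 ≠ 0}.ncard := by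
  by_cases h : p ≤ m ∧ 2 ≤ n
  · obtain ⟨m, rfl⟩ := Nat.exists_eq_add_of_le' h.1
    obtain ⟨n, rfl⟩ := Nat.exists_eq_add_of_le' h.2
    rw [SolSet.ncard_sep_fst_zero_ne_zero, ← Nstab_natCast_eq_ncard hp (by omega)]
    push_cast
    rw [add_sub_cancel_right, add_sub_cancel_right]
  · have hempty : {s ∈ SolSet p (r + 1) m n | s.1 0 ≠ 0} = ∅ := by
      refine Set.eq_empty_of_forall_notMem ?_
      rintro s ⟨hs, h0⟩
      rw [← SolSet.cons_eta s, SolSet.mem_iff, SolSet.size_cons, SolSet.weight_cons, mul_add] at hs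
      have := Nat.le_mul_of_pos_right p (Nat.pos_of_ne_zero h0)
      omega
    rw [hempty, Set.ncard_empty, Nstab, if_neg (by omega)]

theorem Nstab_quot_eq_ncard {p r c q n : ℕ} (hp : 1 < p) (hc : c ≤ 1) (hq : q < p ^ r) :
    Nstab p q (n - c) = {s ∈ SolSet p (r + 1) (c + p * q) n | s.1 0 = 0}.ncard := by
  by_cases h : c ≤ n
  · obtain ⟨n, rfl⟩ := Nat.exists_eq_add_of_le' h
    rw [SolSet.ncard_sep_fst_zero_eq_zero hp hc, ← Nstab_natCast_eq_ncard hp hq]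
    push_cast
    rw [add_sub_cancel_right]
  · have hempty : {s ∈ SolSet p (r + 1) (c + p * q) n | s.1 0 = 0} = ∅ := by
      refine Set.eq_empty_of_forall_notMem ?_
      rintro s ⟨hs, -⟩
      have hb0 := SolSet.snd_zero_eq_mod hp hs
      rw [Nat.add_mul_mod_self_left, Nat.mod_eq_of_lt (hc.trans_lt hp)] at hb0
      rw [← SolSet.cons_eta s, SolSet.mem_iff, SolSet.size_cons] at hs
      omega
    rw [hempty, Set.ncard_empty, Nstab, if_neg (by omega)]

theorem Nstab_eq_add_of_mod_eq {p m n c : ℕ} (hp : 1 < p) (hc : c ≤ 1) (hmc : m % p = c) :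
    Nstab p m n = Nstab p (m - p) (n - 2) + Nstab p ((m - c) / p) (n - c) := by
  obtain ⟨q, rfl⟩ : ∃ q, m = c + p * q := ⟨m / p, (hmc ▸ Nat.mod_add_div m p).symm⟩
  have hq : ((c + p * q : ℕ) - c : ℤ) / p = q := by
    push_cast
    rw [add_sub_cancel_left, Int.mul_ediv_cancel_left _ (by omega)]
  have hm : c + p * q < p ^ (c + p * q + 1) := (Nat.lt_succ_self _).trans (Nat.lt_pow_self hp)
  have hq' : q < p ^ (c + p * q) := by
    have := Nat.le_mul_of_pos_left q (by omega : 0 < p)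
    exact lt_of_le_of_lt (by omega) (Nat.lt_pow_self hp)
  rw [Nstab_natCast_eq_ncard hp hm, SolSet.ncard_eq_ncard_sep_add_ncard_sep,
    Nstab_sub_sub_eq_ncard hp hm, hq, Nstab_quot_eq_ncard hp hc hq']

theorem stmt7_general (p : ℕ) (hp : p.Prime) (m n : ℕ) :
    (p ∣ m → Nstab p (m : ℤ) (n : ℤ) =
        Nstab p ((m : ℤ) - p) ((n : ℤ) - 2) + Nstab p ((m : ℤ) / p) (n : ℤ)) ∧
    (m % p = 1 → Nstab p (m : ℤ) (n : ℤ) =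
        Nstab p ((m : ℤ) - p) ((n : ℤ) - 2) + Nstab p (((m : ℤ) - 1) / p) ((n : ℤ) - 1)) :=
  ⟨fun h => by simpa using Nstab_eq_add_of_mod_eq hp.one_lt zero_le_one (Nat.mod_eq_zero_of_dvd h),
    fun h => by simpa using Nstab_eq_add_of_mod_eq hp.one_lt le_rfl h⟩

/-- the reformulated recursion for `N(m,n)`, an odd prime `p`. -/
theorem stmt7 (p : ℕ) (hp : p.Prime) (hodd : Odd p) (m n : ℕ) :
    (p ∣ m → Nstab p (m : ℤ) (n : ℤ) =
        Nstab p ((m : ℤ) - p) ((n : ℤ) - 2) + Nstab p ((m : ℤ) / p) (n : ℤ)) ∧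
    (m % p = 1 → Nstab p (m : ℤ) (n : ℤ) =
        Nstab p ((m : ℤ) - p) ((n : ℤ) - 2) + Nstab p (((m : ℤ) - 1) / p) ((n : ℤ) - 1)) :=
  stmt7_general p hp m n
end

section
/- Let p be an odd prime and let n be an integer with 1 ≤ n ≤ 2p − 2. Then for every integer m ≥ 0, N(m,n) ≤ F(n), where F(n) is the n-th Fibonacci number. -/
/-!
Put `c₀ = b₁` and `cᵢ = aᵢ + b_{i+1}` (with `b_{r+1} = 0`), so that `m = ∑ cᵢ pⁱ`. Since
`2 ∑ a + ∑ b = n ≤ 2p - 2`, every `cᵢ` is below `p`, hence the `cᵢ` are the base-`p` digits `dᵢ`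
of `m`. A solution is therefore determined by the set `B` of indices `i ≥ 1` with `b_{i+1} = 1`.
This set lies in the set `D` of indices `i ≥ 1` with `dᵢ ≠ 0` and has exactly
`k = 2 ∑_{i ≥ 1} dᵢ + d₀ - n` elements, so `N(m, n) ≤ C(t, k)` with `t = |D| ≤ ∑_{i ≥ 1} dᵢ`.
Then `t + (t - k) ≤ n`, and `C(t, j) ≤ F(t + j)` follows from Pascal's rule and the Fibonacci
recurrence.
-/

open Finset

lemma sum_mul_pow_lt_pow {p : ℕ} {c : ℕ → ℕ} (hc : ∀ j, c j < p) (i : ℕ) :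
    ∑ j ∈ range i, c j * p ^ j < p ^ i := by
  induction i with
  | zero => simp
  | succ i ih =>
    calc ∑ j ∈ range (i + 1), c j * p ^ j < (c i + 1) * p ^ i := by
          rw [sum_range_succ]; linarith
      _ ≤ p ^ (i + 1) := by rw [pow_succ']; exact Nat.mul_le_mul_right _ (hc i)

lemma sum_mul_pow_div_pow_mod {p : ℕ} {c : ℕ → ℕ} (hc : ∀ j, c j < p) {R i : ℕ} (hi : i < R) :
    (∑ j ∈ range R, c j * p ^ j) / p ^ i % p = c i := by
  obtain ⟨l, rfl⟩ := Nat.exists_eq_add_of_lt hi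
  have hp : 0 < p := (Nat.zero_le _).trans_lt (hc 0)
  have hhigh : ∑ j ∈ range (l + 1), c (i + j) * p ^ (i + j)
      = p ^ i * (c i + p * ∑ j ∈ range l, c (i + (j + 1)) * p ^ j) := by
    simp only [sum_range_succ', mul_add, mul_sum, add_zero, pow_add, pow_zero, mul_one, pow_one]
    ring_nf
    exact congrArg _ (sum_congr rfl fun _ _ => by ring)
  rw [show i + l + 1 = i + (l + 1) by ring, sum_range_add, hhigh,
    Nat.add_mul_div_left _ _ (pow_pos hp i), Nat.div_eq_of_lt (sum_mul_pow_lt_pow hc i), zero_add,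
    Nat.add_mul_mod_self_left, Nat.mod_eq_of_lt (hc i)]

lemma le_sum_range_of_eq_zero {f : ℕ → ℕ} {r : ℕ} (hf : ∀ i, r ≤ i → f i = 0) (j : ℕ) :
    f j ≤ ∑ i ∈ range r, f i := by
  by_cases hj : j < r
  · exact single_le_sum (fun i _ => Nat.zero_le (f i)) (mem_range.mpr hj)
  · simp [hf j (not_lt.mp hj)]

lemma card_filter_ne_zero_le_sum {ι : Type*} (s : Finset ι) (f : ι → ℕ) :
    #{i ∈ s | f i ≠ 0} ≤ ∑ i ∈ s, f i := by
  calc #{i ∈ s | f i ≠ 0} = ∑ i ∈ s with f i ≠ 0, 1 := card_eq_sum_ones _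
    _ ≤ ∑ i ∈ s with f i ≠ 0, f i :=
      sum_le_sum fun i hi => Nat.one_le_iff_ne_zero.mpr (mem_filter.mp hi).2
    _ ≤ ∑ i ∈ s, f i := sum_le_sum_of_subset (filter_subset _ _)

lemma Nat.choose_le_fib_add {t j : ℕ} (ht : 0 < t) (hj : j ≤ t) :
    t.choose j ≤ fib (t + j) := by
  induction t generalizing j with
  | zero => omega
  | succ t ih =>
    rcases j with _ | j
    · rw [choose_zero_right]; exact fib_pos.mpr (by omega)
    obtain rfl | hjt := (Nat.le_of_succ_le_succ hj).eq_or_lt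
    · rw [choose_self]; exact fib_pos.mpr (by omega)
    · have h₁ : t.choose j ≤ fib (t + j) := ih (by omega) hjt.le
      have h₂ : t.choose (j + 1) ≤ fib (t + j + 1) := ih (by omega) hjt
      rw [choose_succ_succ', show t + 1 + (j + 1) = t + j + 2 by ring, fib_add_two]
      omega

lemma Nat.choose_le_fib_of_two_mul_sub_le {t k s : ℕ} (hs : 0 < s) (h : 2 * t - k ≤ s) :
    t.choose k ≤ fib s := by
  rcases lt_or_ge t k with htk | hkt
  · simp [choose_eq_zero_of_lt htk]
  rcases t.eq_zero_or_pos with rfl | ht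
  · rw [Nat.le_zero.mp hkt, choose_self]; exact fib_pos.mpr hs
  rw [← choose_symm hkt]
  exact (choose_le_fib_add ht (Nat.sub_le t k)).trans (fib_mono (by omega))

def solutionDigit (ab : (ℕ → ℕ) × (ℕ → ℕ)) : ℕ → ℕ
  | 0 => ab.2 0
  | j + 1 => ab.1 j + ab.2 (j + 1)

def oneIndices (r : ℕ) (ab : (ℕ → ℕ) × (ℕ → ℕ)) : Finset ℕ :=
  {j ∈ range r | ab.2 (j + 1) = 1}

def nonzeroDigits (p r m : ℕ) : Finset ℕ :=
  {j ∈ range r | m / p ^ (j + 1) % p ≠ 0}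

def upperDigitSum (p r m : ℕ) : ℕ :=
  ∑ j ∈ range r, m / p ^ (j + 1) % p

namespace SolSet

variable {p r m n : ℕ} {ab : (ℕ → ℕ) × (ℕ → ℕ)}

lemma solutionDigit_lt (hp : 0 < p) (hn : n ≤ 2 * p - 2) (hab : ab ∈ SolSet p r m n) (j : ℕ) :
    solutionDigit ab j < p := by
  obtain ⟨ha, hb, hb1, hsum, -⟩ := hab
  have hbj := le_sum_range_of_eq_zero hb
  cases j with
  | zero => have := hbj 0; have := hb1 0; simp only [solutionDigit]; omega
  | succ j =>
    have := le_sum_range_of_eq_zero ha j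
    have := hbj (j + 1)
    have := hb1 (j + 1)
    simp only [solutionDigit]; omega

lemma sum_solutionDigit_mul_pow (hab : ab ∈ SolSet p r m n) :
    ∑ j ∈ range (r + 1), solutionDigit ab j * p ^ j = m := by
  rw [sum_range_succ']
  simp only [solutionDigit, pow_zero, mul_one]
  linarith [hab.2.2.2.2]

lemma solutionDigit_eq (hp : 0 < p) (hn : n ≤ 2 * p - 2) (hab : ab ∈ SolSet p r m n) {i : ℕ}
    (hi : i ≤ r) : solutionDigit ab i = m / p ^ i % p := by
  conv_rhs => rw [← sum_solutionDigit_mul_pow hab]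
  exact (sum_mul_pow_div_pow_mod (solutionDigit_lt hp hn hab) (Nat.lt_succ_of_le hi)).symm

lemma snd_succ_eq_ite (hab : ab ∈ SolSet p r m n) (j : ℕ) :
    ab.2 (j + 1) = if j ∈ oneIndices r ab then 1 else 0 := by
  have := hab.2.2.1 (j + 1)
  by_cases hj : j < r
  · simp only [oneIndices, mem_filter, mem_range, hj, true_and]
    split_ifs <;> omega
  · simp [oneIndices, hj, hab.2.1 (j + 1) (by omega)]

lemma oneIndices_subset_nonzeroDigits (hp : 0 < p) (hn : n ≤ 2 * p - 2)
    (hab : ab ∈ SolSet p r m n) :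
    oneIndices r ab ⊆ nonzeroDigits p r m := by
  intro j hj
  simp only [oneIndices, nonzeroDigits, mem_filter, mem_range] at hj ⊢
  refine ⟨hj.1, ?_⟩
  rw [← solutionDigit_eq hp hn hab hj.1]
  simp [solutionDigit, hj.2]

lemma card_oneIndices_add (hp : 0 < p) (hn : n ≤ 2 * p - 2) (hab : ab ∈ SolSet p r m n) :
    #(oneIndices r ab) + n = 2 * upperDigitSum p r m + m % p := by
  have hcard : #(oneIndices r ab) = ∑ j ∈ range r, ab.2 (j + 1) := by
    rw [oneIndices, card_filter]
    refine sum_congr rfl fun j _ => ?_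
    have := hab.2.2.1 (j + 1)
    split_ifs with h <;> omega
  have hdigits : upperDigitSum p r m
      = ∑ j ∈ range r, ab.1 j + ∑ j ∈ range r, ab.2 (j + 1) := by
    rw [← sum_add_distrib]
    exact sum_congr rfl fun j hj =>
      (solutionDigit_eq hp hn hab (mem_range.mp hj)).symm
  have hb : ∑ j ∈ range r, ab.2 j = ab.2 0 + ∑ j ∈ range r, ab.2 (j + 1) := by
    have := sum_range_succ' ab.2 r
    rw [sum_range_succ, hab.2.1 r le_rfl] at this
    omega
  have hd0 : m % p = ab.2 0 := by
    simpa [solutionDigit] using (solutionDigit_eq hp hn hab (Nat.zero_le r)).symm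
  linarith [hab.2.2.2.1]

lemma injOn_oneIndices (hp : 0 < p) (hn : n ≤ 2 * p - 2) :
    Set.InjOn (oneIndices r) (SolSet p r m n) := by
  intro x hx y hy hxy
  have hdigit (j : ℕ) : solutionDigit x j = solutionDigit y j := by
    by_cases hj : j ≤ r
    · rw [solutionDigit_eq hp hn hx hj, solutionDigit_eq hp hn hy hj]
    · obtain ⟨i, rfl⟩ := Nat.exists_eq_add_of_lt (not_le.mp hj)
      simp [solutionDigit, hx.1 (r + i) (by omega), hx.2.1 (r + i + 1) (by omega),
        hy.1 (r + i) (by omega), hy.2.1 (r + i + 1) (by omega)]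
  have hb : x.2 = y.2 := by
    funext j
    cases j with
    | zero => simpa [solutionDigit] using hdigit 0
    | succ j => rw [snd_succ_eq_ite hx, snd_succ_eq_ite hy, hxy]
  have ha : x.1 = y.1 := by
    funext j
    have := hdigit (j + 1)
    simp only [solutionDigit, hb] at this
    omega
  exact Prod.ext ha hb

lemma Ncard_le_choose (hp : 0 < p) (hn : n ≤ 2 * p - 2) :
    Ncard p r m n ≤ (#(nonzeroDigits p r m)).choose (2 * upperDigitSum p r m + m % p - n) := by
  rw [Ncard, Nat.card_coe_set_eq, ← card_powersetCard, ← Set.ncard_coe_finset]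
  refine Set.ncard_le_ncard_of_injOn _ (fun ab hab => ?_) (injOn_oneIndices hp hn)
  rw [mem_coe, mem_powersetCard]
  exact ⟨oneIndices_subset_nonzeroDigits hp hn hab, by have := card_oneIndices_add hp hn hab; omega⟩

lemma Ncard_le_fib (hn₁ : 1 ≤ n) (hn₂ : n ≤ 2 * p - 2) : Ncard p r m n ≤ Nat.fib n := by
  have hcard : #(nonzeroDigits p r m) ≤ upperDigitSum p r m := card_filter_ne_zero_le_sum _ _
  refine (Ncard_le_choose (by omega) hn₂).trans (Nat.choose_le_fib_of_two_mul_sub_le hn₁ ?_)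
  omega

end SolSet

theorem stmt8_general (p : ℕ) (n : ℕ) (hn1 : 1 ≤ n)
    (hn2 : n ≤ 2 * p - 2) (m : ℕ) :
    Nstab p (m : ℤ) (n : ℤ) ≤ Nat.fib n := by
  simpa [Nstab] using SolSet.Ncard_le_fib (r := m + 1) (m := m) hn1 hn2

/-- for an odd prime `p` and `1 ≤ n ≤ 2p - 2`, `N(m,n) ≤ F(n)`,
the `n`-th Fibonacci number (`F(1) = F(2) = 1`). -/
theorem stmt8 (p : ℕ) (hp : p.Prime) (hodd : Odd p) (n : ℕ) (hn1 : 1 ≤ n)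
    (hn2 : n ≤ 2 * p - 2) (m : ℕ) :
    Nstab p (m : ℤ) (n : ℤ) ≤ Nat.fib n :=
  stmt8_general p n hn1 hn2 m
end

section
/- For every integer n ≥ 1, the number of compositions of n satisfies p_o(n) ≤ p(2n²) < e^{2πn/√3}, where p(N) denotes the number of partitions of the positive integer N. -/
/-!
Compositions of `n` number `2 ^ (n - 1)`, and the subsets `S` of `{1, …, m}` inject into the
partitions of any `N ≥ (m + 1) ^ 2`: add to `S` the single part `N - ∑ S`, which exceeds `m`.

For the upper bound, comparing `p(N) x ^ N` with the generating function of partitions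
gives `p(N) x ^ N ≤ ∏_{k ≤ N} (1 - x ^ k)⁻¹` for `0 ≤ x < 1`. Expanding each
`-log (1 - x ^ k)` as `∑_m x ^ (k m) / m` and summing first over `k` bounds the logarithm of
the product by `ζ(2) x / (1 - x)`, using `1 - x ^ m ≥ m x ^ (m - 1) (1 - x)`. With
`x = e^{-t}` this yields `p(N) < exp (N t + π² / (6 t))`, and `t = π / √(6 N)` turns it into
`p(N) < exp (π √(2 N / 3))`, which is `exp (2 π n / √3)` for `N = 2 n²`.
-/

open Finset Real

theorem two_pow_le_card_partition {m N : ℕ} (h : (m + 1) ^ 2 ≤ N) :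
    2 ^ m ≤ Fintype.card N.Partition := by
  have hsum (S : Finset (Fin m)) : ∑ i ∈ S, ((i : ℕ) + 1) + (m + 1) ≤ N := by
    have h1 : ∑ i ∈ S, ((i : ℕ) + 1) ≤ #S * m := sum_le_card_nsmul _ _ _ fun i _ => i.isLt
    have h2 : #S ≤ m := (card_le_univ S).trans_eq (Fintype.card_fin m)
    nlinarith
  let f (S : Finset (Fin m)) : N.Partition :=
    { parts := (N - ∑ i ∈ S, ((i : ℕ) + 1)) ::ₘ S.val.map fun i : Fin m => (i : ℕ) + 1
      parts_pos := by
        have := hsum S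
        simp only [Multiset.mem_cons, Multiset.mem_map]
        rintro _ (rfl | ⟨i, -, rfl⟩) <;> omega
      parts_sum := by
        have := hsum S
        rw [Multiset.sum_cons, ← Finset.sum_eq_multiset_sum]
        omega }
  have hmem (S : Finset (Fin m)) (i : Fin m) : i ∈ S ↔ (i : ℕ) + 1 ∈ (f S).parts := by
    have := hsum S
    have := i.isLt
    simp only [f, Multiset.mem_cons, Multiset.mem_map, add_left_inj, Fin.val_inj, mem_val,
      exists_eq_right]
    exact (or_iff_right (by omega)).symm
  have hf : Function.Injective f := fun S T hST => by
    ext i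
    rw [hmem, hmem, hST]
  calc 2 ^ m = Fintype.card (Finset (Fin m)) := by simp
    _ ≤ Fintype.card N.Partition := Fintype.card_le_of_injective f hf

namespace Nat.Partition

theorem count_mul_le {n : ℕ} (p : n.Partition) (a : ℕ) : p.parts.count a * a ≤ n := by
  obtain ⟨u, hu⟩ := Multiset.le_iff_exists_add.1
    (Multiset.le_count_iff_replicate_le.1 (le_refl (p.parts.count a)))
  calc p.parts.count a * a = (Multiset.replicate (p.parts.count a) a).sum := by simp
    _ ≤ (Multiset.replicate (p.parts.count a) a + u).sum := by
      rw [Multiset.sum_add]; exact le_self_add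
    _ = p.parts.sum := by rw [← hu]
    _ = n := p.parts_sum

theorem sum_succ_mul_count {n : ℕ} (p : n.Partition) :
    ∑ i : Fin n, ((i : ℕ) + 1) * p.parts.count ((i : ℕ) + 1) = n := by
  have h := (mem_finsuppAntidiag.1 p.toFinsuppAntidiag_mem_finsuppAntidiag).1
  rw [Fin.sum_univ_eq_sum_range (fun i => (fun m => m * p.parts.count m) (i + 1)), range_eq_Ico,
    sum_Ico_add' (fun m => m * p.parts.count m), zero_add, Ico_add_one_right_eq_Icc]
  exact (sum_congr rfl fun i _ => mul_comm _ _).trans h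

theorem count_succ_injective (n : ℕ) :
    Function.Injective fun (p : n.Partition) (i : Fin n) => p.parts.count ((i : ℕ) + 1) := by
  intro p q h
  refine Nat.Partition.ext (Multiset.ext.2 fun a => ?_)
  rcases Nat.eq_zero_or_pos a with rfl | ha
  · rw [Multiset.count_eq_zero.2 fun h => (p.parts_pos h).ne rfl,
      Multiset.count_eq_zero.2 fun h => (q.parts_pos h).ne rfl]
  rcases le_or_gt a n with han | han
  · simpa [Nat.sub_add_cancel ha] using congrFun h ⟨a - 1, by omega⟩
  · rw [Multiset.count_eq_zero.2 fun h => (p.le_of_mem_parts h).not_gt han,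
      Multiset.count_eq_zero.2 fun h => (q.le_of_mem_parts h).not_gt han]

end Nat.Partition

theorem card_partition_mul_pow_le_prod {x : ℝ} (hx0 : 0 ≤ x) (hx1 : x < 1) (N : ℕ) :
    (Fintype.card N.Partition : ℝ) * x ^ N ≤ ∏ i : Fin N, (1 - x ^ ((i : ℕ) + 1))⁻¹ := by
  let c : N.Partition ↪ (Fin N → ℕ) := ⟨_, Nat.Partition.count_succ_injective N⟩
  have hc : univ.map c ⊆ Fintype.piFinset fun _ => range (N + 1) := by
    intro g hg
    obtain ⟨p, -, rfl⟩ := mem_map.1 hg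
    refine Fintype.mem_piFinset.2 fun i => mem_range_succ_iff.2 ?_
    exact (Nat.le_mul_of_pos_right _ i.succ_pos).trans (p.count_mul_le _)
  calc (Fintype.card N.Partition : ℝ) * x ^ N
      = ∑ p : N.Partition, ∏ i : Fin N, x ^ (((i : ℕ) + 1) * c p i) := by
        simp [c, prod_pow_eq_pow_sum, Nat.Partition.sum_succ_mul_count]
    _ = ∑ g ∈ univ.map c, ∏ i : Fin N, x ^ (((i : ℕ) + 1) * g i) := by rw [sum_map]
    _ ≤ ∑ g ∈ Fintype.piFinset fun _ => range (N + 1),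
          ∏ i : Fin N, x ^ (((i : ℕ) + 1) * g i) :=
        sum_le_sum_of_subset_of_nonneg hc fun _ _ _ => by positivity
    _ = ∏ i : Fin N, ∑ j ∈ range (N + 1), (x ^ ((i : ℕ) + 1)) ^ j := by
        simp_rw [prod_univ_sum, pow_mul]
    _ ≤ ∏ i : Fin N, (1 - x ^ ((i : ℕ) + 1))⁻¹ :=
        Finset.prod_le_prod (fun _ _ => by positivity) fun i _ => by
          have h := geom_sum_Ico_le_of_lt_one (m := 0) (n := N + 1)
            (pow_nonneg hx0 ((i : ℕ) + 1)) (pow_lt_one₀ hx0 hx1 (Nat.succ_ne_zero (i : ℕ)))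
          rwa [← range_eq_Ico, pow_zero, one_div] at h

theorem pow_succ_div_one_sub_pow_succ_le {x : ℝ} (hx0 : 0 < x) (hx1 : x < 1) (m : ℕ) :
    x ^ (m + 1) / (1 - x ^ (m + 1)) ≤ x / ((m + 1) * (1 - x)) := by
  have hgeom : (m + 1) * x ^ m ≤ ∑ j ∈ range (m + 1), x ^ j := by
    simpa using card_nsmul_le_sum (range (m + 1)) (x ^ ·) (x ^ m) fun j hj =>
      pow_le_pow_of_le_one hx0.le hx1.le (mem_range_succ_iff.1 hj)
  have hx1' : 0 < 1 - x := sub_pos.2 hx1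
  calc x ^ (m + 1) / (1 - x ^ (m + 1))
      ≤ x ^ (m + 1) / ((m + 1) * x ^ m * (1 - x)) := by
        refine div_le_div_of_nonneg_left (by positivity) (by positivity) ?_
        rw [← mul_neg_geom_sum, mul_comm (1 - x)]
        exact mul_le_mul_of_nonneg_right hgeom hx1'.le
    _ = x / ((m + 1) * (1 - x)) := by
        field_simp
        ring

theorem prod_inv_one_sub_pow_le_exp {x : ℝ} (hx0 : 0 < x) (hx1 : x < 1) (N : ℕ) :
    ∏ i : Fin N, (1 - x ^ ((i : ℕ) + 1))⁻¹ ≤ exp (π ^ 2 / 6 * (x / (1 - x))) := by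
  have hlt (k : ℕ) : x ^ (k + 1) < 1 := pow_lt_one₀ hx0.le hx1 k.succ_ne_zero
  have hlog (i : Fin N) : HasSum (fun m : ℕ => (x ^ ((i : ℕ) + 1)) ^ (m + 1) / (m + 1))
      (-log (1 - x ^ ((i : ℕ) + 1))) :=
    hasSum_pow_div_log_of_abs_lt_one (by rw [abs_of_pos (by positivity)]; exact hlt i)
  have hzeta : HasSum (fun m : ℕ => x / (1 - x) * (1 / ((m : ℝ) + 1) ^ 2))
      (x / (1 - x) * (π ^ 2 / 6)) := by
    refine HasSum.mul_left _ ?_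
    simpa using (hasSum_nat_add_iff' 1).2 hasSum_zeta_two
  have hterm (m : ℕ) : ∑ i : Fin N, (x ^ ((i : ℕ) + 1)) ^ (m + 1) / (m + 1)
      ≤ x / (1 - x) * (1 / ((m : ℝ) + 1) ^ 2) := by
    set y := x ^ (m + 1)
    have hgeom : ∑ i ∈ range N, y ^ (i + 1) ≤ y / (1 - y) := by
      have h := geom_sum_Ico_le_of_lt_one (m := 0) (n := N) (pow_nonneg hx0.le (m + 1)) (hlt m)
      rw [← range_eq_Ico, pow_zero, one_div] at h
      simp_rw [pow_succ', ← mul_sum, div_eq_mul_inv]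
      exact mul_le_mul_of_nonneg_left h (by positivity)
    calc ∑ i : Fin N, (x ^ ((i : ℕ) + 1)) ^ (m + 1) / (m + 1)
        = (∑ i ∈ range N, y ^ (i + 1)) / (m + 1) := by
          rw [Fin.sum_univ_eq_sum_range (fun i => (x ^ (i + 1)) ^ (m + 1) / (m + 1)), sum_div]
          simp_rw [y, ← pow_mul, mul_comm]
      _ ≤ x / ((m + 1) * (1 - x)) / (m + 1) := by
          gcongr
          exact hgeom.trans (pow_succ_div_one_sub_pow_succ_le hx0 hx1 m)
      _ = x / (1 - x) * (1 / ((m : ℝ) + 1) ^ 2) := by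
          field_simp
  have hsum := hasSum_le hterm (hasSum_sum fun i _ => hlog i) hzeta
  calc ∏ i : Fin N, (1 - x ^ ((i : ℕ) + 1))⁻¹
      = exp (∑ i : Fin N, -log (1 - x ^ ((i : ℕ) + 1))) := by
        rw [exp_sum]
        refine prod_congr rfl fun i _ => ?_
        rw [exp_neg, exp_log (sub_pos.2 (hlt i))]
    _ ≤ exp (π ^ 2 / 6 * (x / (1 - x))) := by
        rw [mul_comm]
        exact exp_le_exp.2 hsum

theorem card_partition_lt_exp {t : ℝ} (ht : 0 < t) (N : ℕ) :
    (Fintype.card N.Partition : ℝ) < exp (N * t + π ^ 2 / (6 * t)) := by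
  set x := exp (-t)
  have hx0 : 0 < x := exp_pos _
  have hx1 : x < 1 := exp_lt_one_iff.2 (neg_lt_zero.2 ht)
  have hx_mul : x * exp t = 1 := by rw [← exp_add, neg_add_cancel, exp_zero]
  have hfrac : x / (1 - x) < 1 / t := by
    rw [div_lt_div_iff₀ (sub_pos.2 hx1) ht]
    linarith [mul_lt_mul_of_pos_left (add_one_lt_exp ht.ne') hx0]
  have hxN : x ^ N * exp (N * t) = 1 := by
    rw [← exp_nat_mul, ← exp_add, mul_neg, neg_add_cancel, exp_zero]
  calc (Fintype.card N.Partition : ℝ) = Fintype.card N.Partition * x ^ N * exp (N * t) := by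
        rw [mul_assoc, hxN, mul_one]
    _ ≤ exp (π ^ 2 / 6 * (x / (1 - x))) * exp (N * t) := by
        gcongr
        exact (card_partition_mul_pow_le_prod hx0.le hx1 N).trans
          (prod_inv_one_sub_pow_le_exp hx0 hx1 N)
    _ < exp (π ^ 2 / 6 * (1 / t)) * exp (N * t) := by gcongr
    _ = exp (N * t + π ^ 2 / (6 * t)) := by
        rw [← exp_add]
        ring_nf

/-- the number of compositions of `n ≥ 1` satisfies
`p_o(n) ≤ p(2n²) < e^{2πn/√3}`, where `p(N)` is the number of partitions of `N`. -/
theorem stmt10 (n : ℕ) (hn : 1 ≤ n) :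
    Fintype.card (Composition n) ≤ Fintype.card (Nat.Partition (2 * n ^ 2)) ∧
    (Fintype.card (Nat.Partition (2 * n ^ 2)) : ℝ) <
      Real.exp (2 * Real.pi * n / Real.sqrt 3) := by
  refine ⟨?_, ?_⟩
  · rw [composition_card]
    exact two_pow_le_card_partition (by rw [Nat.sub_add_cancel hn]; nlinarith)
  · have hn' : (0 : ℝ) < n := by exact_mod_cast hn
    have ht : 0 < π / (2 * √3 * n) := by positivity
    refine (card_partition_lt_exp ht _).trans_eq (congrArg exp ?_)
    have h3 : √3 ^ 2 = 3 := sq_sqrt (by norm_num)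
    field_simp
    push_cast
    linear_combination (4 * (n : ℝ) ^ 2) * h3
end

section
/- Let p be a prime, n ≥ 1 an integer, and let c = (c_1, …, c_r) be a composition of n. Then for every positive integer m, the number of tuples (s_1, …, s_r) of nonnegative integers with s_1 < s_2 < ⋯ < s_r and m = Σ_{i=1}^r c_i p^{s_i} is at most 2^n. -/
/-!
Write `s_p` for the base-`p` digit sum. The key is the stronger bound
`#B(c, m) · 2 ^ s_p(m) ≤ 2 ^ (c_1 + ⋯ + c_r)`, proved by induction on `r`. Sorting the
representations by their first exponent `k` writes `m = c_1 p^k + p^(k+1) X`, with `X`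
represented by the tail of `c` and `k ≤ v`, where `m = p^v u` and `p ∤ u`.
If `p ∤ c_1`, then `k = v` and `u = c_1 + p X`, so subadditivity of `s_p` gives
`s_p(u) ≤ c_1 + s_p(X)`. If `c_1 = p a`, then `a + X = p^j u` with `j = v - 1 - k`. For the
`D = ⌊log_p a⌋ + 1` smallest `j` subadditivity costs a factor `2 ^ s_p(a)`; for larger `j` the
borrows in `p^j u - a` give `s_p(X) ≥ s_p(u) + j - D`, so these fibres contribute a geometric
series. Altogether the factor is `D · 2 ^ s_p(a) + 2 ≤ 2 ^ (p a)`.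
-/

open Finset

def digitSum (b n : ℕ) : ℕ := (b.digits n).sum

section DigitSum

variable {b : ℕ}

@[simp]
theorem digitSum_zero (b : ℕ) : digitSum b 0 = 0 := by simp [digitSum]

theorem digitSum_le (b n : ℕ) : digitSum b n ≤ n := Nat.digit_sum_le b n

theorem digitSum_of_lt {r : ℕ} (hr : r < b) : digitSum b r = r := by
  rcases eq_or_ne r 0 with rfl | hr0
  · simp
  · simp [digitSum, Nat.digits_of_lt b r hr0 hr]

theorem digitSum_pos {n : ℕ} (hn : n ≠ 0) : 0 < digitSum b n :=
  (Nat.pos_of_ne_zero (Nat.getLast_digit_ne_zero b hn)).trans_le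
    (List.le_sum_of_mem (List.getLast_mem _))

theorem digitSum_pow_mul_add (hb : 1 < b) {k r : ℕ} (hr : r < b ^ k) (a : ℕ) :
    digitSum b (b ^ k * a + r) = digitSum b a + digitSum b r := by
  rcases Nat.eq_zero_or_pos a with rfl | ha
  · simp
  have hlen : (b.digits r).length ≤ k := (Nat.digits_length_le_iff hb r).mpr hr
  have := Nat.digits_append_zeroes_append_digits (k := k - (b.digits r).length) (n := r) hb ha
  rw [Nat.add_sub_cancel' hlen] at this
  simp only [digitSum, add_comm (b ^ k * a), ← this, List.sum_append, List.sum_replicate,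
    smul_zero, zero_add, add_comm (b.digits r).sum]

theorem digitSum_pow_mul (hb : 1 < b) (k n : ℕ) : digitSum b (b ^ k * n) = digitSum b n := by
  simpa using digitSum_pow_mul_add hb (pow_pos (zero_lt_one.trans hb) k) n

theorem digitSum_mul_add_of_lt (hb : 1 < b) {r : ℕ} (hr : r < b) (n : ℕ) :
    digitSum b (b * n + r) = digitSum b n + r := by
  have h := digitSum_pow_mul_add hb (k := 1) (by rwa [pow_one]) n
  rwa [pow_one, digitSum_of_lt hr] at h

theorem digitSum_add_le (hb : 1 < b) (x y : ℕ) :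
    digitSum b (x + y) ≤ digitSum b x + digitSum b y := by
  induction hs : x + y using Nat.strong_induction_on generalizing x y with | _ s ih =>
  subst hs
  rcases Nat.eq_zero_or_pos (x + y) with hxy | hxy
  · simp [Nat.add_eq_zero_iff.mp hxy]
  have hb0 : 0 < b := zero_lt_one.trans hb
  have split (n : ℕ) : digitSum b n = digitSum b (n / b) + n % b := by
    conv_lhs => rw [← Nat.div_add_mod n b]
    exact digitSum_mul_add_of_lt hb (Nat.mod_lt n hb0) _
  have hx := Nat.div_add_mod x b
  have hy := Nat.div_add_mod y b
  have hxb := Nat.mod_lt x hb0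
  have hyb := Nat.mod_lt y hb0
  have hmul := Nat.mul_le_mul_right (x / b + y / b) hb
  have ih_div := ih _ (by lia) (x / b) (y / b) rfl
  rw [split x, split y]
  by_cases hcarry : x % b + y % b < b
  · rw [show x + y = b * (x / b + y / b) + (x % b + y % b) by lia,
      digitSum_mul_add_of_lt hb hcarry]
    lia
  · have ih_carry := ih _ (by lia) (x / b + y / b) 1 rfl
    rw [digitSum_of_lt hb] at ih_carry
    rw [show x + y = b * (x / b + y / b + 1) + (x % b + y % b - b) by lia,
      digitSum_mul_add_of_lt hb (by lia)]
    lia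

theorem digitSum_add_le_digitSum_pow_mul_sub_one (hb : 1 < b) {u : ℕ} (hu : 0 < u) (i : ℕ) :
    digitSum b u + i ≤ digitSum b (b ^ i * u - 1) + 1 := by
  induction i with
  | zero =>
    have := digitSum_add_le hb (u - 1) 1
    rw [Nat.sub_add_cancel hu, digitSum_of_lt hb] at this
    simpa using this
  | succ i ih =>
    have hpos : b ≤ b ^ i * u * b := Nat.le_mul_of_pos_left b (Nat.mul_pos (pow_pos (by lia) i) hu)
    have e : b ^ (i + 1) * u - 1 = b * (b ^ i * u - 1) + (b - 1) := by
      rw [pow_succ, mul_right_comm, Nat.mul_sub_one, mul_comm b]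
      lia
    rw [e, digitSum_mul_add_of_lt hb (by lia)]
    lia

theorem digitSum_add_le_digitSum_pow_mul_sub (hb : 1 < b) {a u D j : ℕ} (ha0 : a ≠ 0)
    (ha : a < b ^ D) (hDj : D ≤ j) (hu : 0 < u) :
    digitSum b u + (j - D) ≤ digitSum b (b ^ j * u - a) := by
  obtain ⟨i, rfl⟩ := Nat.exists_eq_add_of_le hDj
  have hpos : 0 < b ^ i * u := Nat.mul_pos (pow_pos (by lia) i) hu
  have e : b ^ (D + i) * u - a = b ^ D * (b ^ i * u - 1) + (b ^ D - a) := by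
    rw [pow_add, mul_assoc, Nat.mul_sub_one]
    have : b ^ D ≤ b ^ D * (b ^ i * u) := Nat.le_mul_of_pos_right _ hpos
    lia
  rw [e, digitSum_pow_mul_add hb (by lia), Nat.add_sub_cancel_left]
  have := digitSum_add_le_digitSum_pow_mul_sub_one hb hu i
  have := digitSum_pos (b := b) (n := b ^ D - a) (by lia)
  lia

end DigitSum

theorem sum_range_le_of_le_ite {f : ℕ → ℕ} {n D A B : ℕ}
    (hf : ∀ j < n, f j ≤ if j < D then B else A / 2 ^ (j - D)) :
    ∑ j ∈ range n, f j ≤ D * B + 2 * A := by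
  set g : ℕ → ℕ := fun j => if j < D then B else A / 2 ^ (j - D)
  calc ∑ j ∈ range n, f j ≤ ∑ j ∈ range n, g j := sum_le_sum fun j hj => hf j (mem_range.mp hj)
    _ ≤ ∑ j ∈ range (D + n), g j := sum_le_sum_of_subset (range_subset_range.mpr (by lia))
    _ = D * B + ∑ i ∈ range n, A / 2 ^ i := by simp [g, sum_range_add, sum_ite_of_true]
    _ ≤ D * B + 2 * A := by
      have := Nat.geom_sum_le le_rfl A n
      simp only [Nat.add_one_sub_one, Nat.div_one] at this
      lia

theorem log_add_one_mul_two_pow_digitSum_add_two_le {p a : ℕ} (hp : 1 < p) (ha : a ≠ 0) :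
    (Nat.log p a + 1) * 2 ^ digitSum p a + 2 ≤ 2 ^ (p * a) := by
  have hlog : Nat.log p a + 1 ≤ a := Nat.log_lt_self p ha
  have hsd : 2 ^ digitSum p a ≤ 2 ^ a := Nat.pow_le_pow_right two_pos (digitSum_le p a)
  have hpow : 2 ^ (2 * a) ≤ 2 ^ (p * a) := Nat.pow_le_pow_right two_pos (by nlinarith)
  have ha2 : a + 1 ≤ 2 ^ a := Nat.lt_two_pow_self
  have h2 : 2 ≤ 2 ^ a := by
    calc 2 = 2 ^ 1 := rfl
      _ ≤ 2 ^ a := Nat.pow_le_pow_right two_pos (by lia)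
  rw [two_mul, pow_add] at hpow
  nlinarith [Nat.mul_le_mul hlog hsd]

theorem le_of_pow_dvd_pow_mul {p u k v : ℕ} (hp : p ≠ 0) (hu : ¬ p ∣ u) (h : p ^ k ∣ p ^ v * u) :
    k ≤ v := by
  by_contra! hvk
  have hdvd : p ^ v * p ∣ p ^ v * u := (pow_succ p v ▸ pow_dvd_pow p hvk).trans h
  exact hu (Nat.dvd_of_mul_dvd_mul_left (pow_pos (Nat.pos_of_ne_zero hp) v) hdvd)

theorem Set.ncard_le_sum_ncard_fiber {α : Type*} (S : Set α) (f : α → ℕ) {K : ℕ}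
    (h : ∀ x ∈ S, f x < K) : S.ncard ≤ ∑ k ∈ Finset.range K, {x ∈ S | f x = k}.ncard := by
  have hS : S = ⋃ k ∈ Finset.range K, {x ∈ S | f x = k} := by
    ext x
    simpa using fun hx => h x hx
  conv_lhs => rw [hS]
  exact Finset.set_ncard_biUnion_le _ _

section FiberSums

variable {p : ℕ}

theorem sum_mul_two_pow_digitSum_le_of_not_dvd (hp : 1 < p) {c₀ v u A : ℕ} (hc : ¬ p ∣ c₀)
    {F : ℕ → ℕ} (hF : ∀ k, F k ≠ 0 → ∃ X, p ^ v * u = c₀ * p ^ k + p ^ (k + 1) * X ∧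
      F k * 2 ^ digitSum p X ≤ A) :
    (∑ k ∈ range (v + 1), F k) * 2 ^ digitSum p u ≤ 2 ^ c₀ * A := by
  have hp0 : p ≠ 0 := by lia
  have hF_lt : ∀ k < v, F k = 0 := by
    intro k hk
    by_contra hFk
    obtain ⟨X, hX, -⟩ := hF k hFk
    have hdvd : p ^ (k + 1) ∣ c₀ * p ^ k + p ^ (k + 1) * X :=
      hX ▸ dvd_mul_of_dvd_left (pow_dvd_pow p hk) u
    replace hdvd := (Nat.dvd_add_left (dvd_mul_right _ X)).mp hdvd
    rw [pow_succ, mul_comm c₀] at hdvd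
    exact hc (Nat.dvd_of_mul_dvd_mul_left (pow_pos (by lia) k) hdvd)
  rw [sum_range_succ, sum_eq_zero fun k hk => hF_lt k (mem_range.mp hk), zero_add]
  rcases eq_or_ne (F v) 0 with hFv | hFv
  · simp [hFv]
  obtain ⟨X, hX, hFX⟩ := hF v hFv
  have hu : u = c₀ + p * X := mul_left_cancel₀ (pow_ne_zero v hp0) (by rw [hX]; ring)
  have hsd : digitSum p u ≤ c₀ + digitSum p X := by
    have h := digitSum_add_le hp c₀ (p ^ 1 * X)
    rw [digitSum_pow_mul hp, pow_one, ← hu] at h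
    have := digitSum_le p c₀
    lia
  calc F v * 2 ^ digitSum p u ≤ F v * 2 ^ (c₀ + digitSum p X) := by gcongr; lia
    _ = 2 ^ c₀ * (F v * 2 ^ digitSum p X) := by ring
    _ ≤ 2 ^ c₀ * A := by gcongr

theorem mul_two_pow_digitSum_le_ite (hp : 1 < p) {a u X j F A : ℕ} (ha : a ≠ 0) (hu : 0 < u)
    (hX : a + X = p ^ j * u) (hFX : F * 2 ^ digitSum p X ≤ A) :
    F * 2 ^ digitSum p u ≤
      if j < Nat.log p a + 1 then 2 ^ digitSum p a * A else A / 2 ^ (j - (Nat.log p a + 1)) := by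
  split_ifs with hjD
  · have hsd : digitSum p u ≤ digitSum p a + digitSum p X := by
      rw [← digitSum_pow_mul hp j u, ← hX]
      exact digitSum_add_le hp a X
    calc F * 2 ^ digitSum p u ≤ F * 2 ^ (digitSum p a + digitSum p X) := by gcongr; lia
      _ = 2 ^ digitSum p a * (F * 2 ^ digitSum p X) := by ring
      _ ≤ 2 ^ digitSum p a * A := by gcongr
  · have hsd : digitSum p u + (j - (Nat.log p a + 1)) ≤ digitSum p X := by
      rw [show X = p ^ j * u - a by lia]
      exact digitSum_add_le_digitSum_pow_mul_sub hp ha (Nat.lt_pow_succ_log_self hp a) (by lia) hu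
    rw [Nat.le_div_iff_mul_le (by positivity)]
    calc F * 2 ^ digitSum p u * 2 ^ (j - (Nat.log p a + 1))
        = F * 2 ^ (digitSum p u + (j - (Nat.log p a + 1))) := by ring
      _ ≤ F * 2 ^ digitSum p X := by gcongr; lia
      _ ≤ A := hFX

theorem sum_mul_two_pow_digitSum_le_of_dvd (hp : 1 < p) {a v u A : ℕ} (ha : a ≠ 0)
    (hu : ¬ p ∣ u) {F : ℕ → ℕ}
    (hF : ∀ k, F k ≠ 0 → ∃ X, p ^ v * u = p * a * p ^ k + p ^ (k + 1) * X ∧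
      F k * 2 ^ digitSum p X ≤ A) :
    (∑ k ∈ range (v + 1), F k) * 2 ^ digitSum p u ≤ 2 ^ (p * a) * A := by
  have hp0 : p ≠ 0 := by lia
  have hfiber : ∀ k, F k ≠ 0 → k < v ∧
      ∃ X, a + X = p ^ (v - 1 - k) * u ∧ F k * 2 ^ digitSum p X ≤ A := by
    intro k hFk
    obtain ⟨X, hX, hFX⟩ := hF k hFk
    have hX' : p ^ v * u = p ^ (k + 1) * (a + X) := by rw [hX]; ring
    have hkv : k + 1 ≤ v := le_of_pow_dvd_pow_mul hp0 hu ⟨a + X, hX'⟩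
    refine ⟨hkv, X, mul_left_cancel₀ (pow_ne_zero (k + 1) hp0) ?_, hFX⟩
    rw [← hX', ← mul_assoc, ← pow_add, show k + 1 + (v - 1 - k) = v by lia]
  have hFv : F v = 0 := by
    by_contra hFv
    exact lt_irrefl v (hfiber v hFv).1
  have hbound (j : ℕ) (hj : j < v) : F (v - 1 - j) * 2 ^ digitSum p u ≤
      if j < Nat.log p a + 1 then 2 ^ digitSum p a * A else A / 2 ^ (j - (Nat.log p a + 1)) := by
    rcases eq_or_ne (F (v - 1 - j)) 0 with hFj | hFj
    · simp [hFj]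
    obtain ⟨-, X, hX, hFX⟩ := hfiber _ hFj
    rw [show v - 1 - (v - 1 - j) = j by lia] at hX
    exact mul_two_pow_digitSum_le_ite hp ha (Nat.pos_of_ne_zero (by rintro rfl; simp at hu)) hX hFX
  calc (∑ k ∈ range (v + 1), F k) * 2 ^ digitSum p u
      = ∑ j ∈ range v, F (v - 1 - j) * 2 ^ digitSum p u := by
        rw [sum_range_succ, hFv, add_zero, sum_mul,
          ← sum_range_reflect (fun k => F k * 2 ^ digitSum p u)]
    _ ≤ (Nat.log p a + 1) * (2 ^ digitSum p a * A) + 2 * A := sum_range_le_of_le_ite hbound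
    _ = ((Nat.log p a + 1) * 2 ^ digitSum p a + 2) * A := by ring
    _ ≤ 2 ^ (p * a) * A := by
      gcongr
      exact log_add_one_mul_two_pow_digitSum_add_two_le hp ha

end FiberSums

section Representations

variable {p r : ℕ}

/-- The paper's `B_{A,c}(m)`, for a composition given as a function on `Fin r`. -/
def reps (p : ℕ) {r : ℕ} (c : Fin r → ℕ) (m : ℕ) : Set (Fin r → ℕ) :=
  {s | StrictMono s ∧ m = ∑ i, c i * p ^ s i}

theorem reps_finite (hp : 1 < p) {c : Fin r → ℕ} (hc : ∀ i, 0 < c i) (m : ℕ) :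
    (reps p c m).Finite := by
  refine (Set.Finite.pi (t := fun _ => Set.Iic m) fun _ => Set.finite_Iic m).subset ?_
  rintro s ⟨-, hm⟩ i -
  calc s i ≤ p ^ s i := (Nat.lt_pow_self hp).le
    _ ≤ c i * p ^ s i := Nat.le_mul_of_pos_left _ (hc i)
    _ ≤ m := hm ▸ single_le_sum (fun j _ => Nat.zero_le (c j * p ^ s j)) (mem_univ i)

def tailShift (s : Fin (r + 1) → ℕ) : Fin r → ℕ := fun i => s i.succ - (s 0 + 1)

theorem exists_eq_add_of_mem_reps {c s : Fin (r + 1) → ℕ} {m : ℕ} (hs : s ∈ reps p c m) :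
    ∃ X, m = c 0 * p ^ s 0 + p ^ (s 0 + 1) * X ∧ tailShift s ∈ reps p (Fin.tail c) X := by
  obtain ⟨hmono, hm⟩ := hs
  have hlt (i : Fin r) : s 0 < s i.succ := hmono (Fin.succ_pos i)
  refine ⟨∑ i, Fin.tail c i * p ^ tailShift s i, ?_, fun i j hij => ?_, rfl⟩
  · rw [hm, Fin.sum_univ_succ, mul_sum]
    congr 1
    refine sum_congr rfl fun i _ => ?_
    rw [tailShift, Fin.tail, mul_left_comm, ← pow_add, Nat.add_sub_cancel' (hlt i)]
  · have := hmono (Fin.succ_lt_succ_iff.mpr hij)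
    have := hlt i
    simp only [tailShift]
    lia

theorem ncard_reps_fiber_le (hp : 1 < p) {c : Fin (r + 1) → ℕ} (hc : ∀ i, 0 < c i) {m k X : ℕ}
    (hX : m = c 0 * p ^ k + p ^ (k + 1) * X) :
    {s ∈ reps p c m | s 0 = k}.ncard ≤ (reps p (Fin.tail c) X).ncard := by
  refine Set.ncard_le_ncard_of_injOn tailShift ?_ ?_ (reps_finite hp (fun i => hc i.succ) X)
  · rintro s ⟨hs, rfl⟩
    obtain ⟨X', hX', hmem⟩ := exists_eq_add_of_mem_reps hs
    convert hmem
    exact mul_left_cancel₀ (pow_ne_zero _ (by lia)) (Nat.add_left_cancel (hX.symm.trans hX'))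
  · rintro s ⟨⟨hs, -⟩, hs0⟩ t ⟨⟨ht, -⟩, ht0⟩ hst
    funext i
    refine Fin.cases (hs0.trans ht0.symm) (fun i => ?_) i
    have hi := congrFun hst i
    have := hs (Fin.succ_pos i)
    have := ht (Fin.succ_pos i)
    simp only [tailShift] at hi
    lia

theorem ncard_reps_mul_two_pow_digitSum_le (hp : 1 < p) :
    ∀ {r} (c : Fin r → ℕ), (∀ i, 0 < c i) →
      ∀ m, (reps p c m).ncard * 2 ^ digitSum p m ≤ 2 ^ ∑ i, c i := by
  intro r
  induction r with
  | zero =>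
    intro c _ m
    rcases eq_or_ne m 0 with rfl | hm
    · simpa using Set.ncard_le_one_of_subsingleton (reps p c 0)
    · have : reps p c m = ∅ := by simp [reps, hm]
      simp [this]
  | succ r ih =>
    intro c hc m
    rcases eq_or_ne m 0 with rfl | hm
    · have : reps p c 0 = ∅ := by
        ext s
        simp only [reps, Set.mem_ofPred_eq, Set.mem_empty_iff_false, iff_false, not_and]
        intro _ h
        exact (Nat.mul_pos (hc 0) (pow_pos (by lia) _)).ne'
          (Finset.sum_eq_zero_iff.mp h.symm 0 (mem_univ 0))
      simp [this]
    obtain ⟨v, u, hu, rfl⟩ := Nat.exists_eq_pow_mul_and_not_dvd hm p (by lia)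
    set F := fun k => {s ∈ reps p c (p ^ v * u) | s 0 = k}.ncard
    have hF : ∀ k, F k ≠ 0 → ∃ X, p ^ v * u = c 0 * p ^ k + p ^ (k + 1) * X ∧
        F k * 2 ^ digitSum p X ≤ 2 ^ ∑ i, Fin.tail c i := by
      intro k hk
      obtain ⟨s, hs, rfl⟩ := Set.nonempty_of_ncard_ne_zero hk
      obtain ⟨X, hX, -⟩ := exists_eq_add_of_mem_reps hs
      exact ⟨X, hX, (Nat.mul_le_mul_right _ (ncard_reps_fiber_le hp hc hX)).trans
        (ih _ (fun i => hc i.succ) X)⟩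
    have hsum : (reps p c (p ^ v * u)).ncard ≤ ∑ k ∈ range (v + 1), F k := by
      refine Set.ncard_le_sum_ncard_fiber _ _ fun s hs => Nat.lt_succ_of_le ?_
      obtain ⟨X, hX, -⟩ := exists_eq_add_of_mem_reps hs
      exact le_of_pow_dvd_pow_mul (by lia) hu ⟨c 0 + p * X, by rw [hX]; ring⟩
    rw [digitSum_pow_mul hp, Fin.sum_univ_succ, pow_add]
    refine (Nat.mul_le_mul_right _ hsum).trans ?_
    by_cases hdvd : p ∣ c 0
    · obtain ⟨a, ha⟩ := hdvd
      rw [ha] at hF ⊢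
      exact sum_mul_two_pow_digitSum_le_of_dvd hp (by rintro rfl; simpa [ha] using hc 0) hu hF
    · exact sum_mul_two_pow_digitSum_le_of_not_dvd hp hdvd hF

end Representations

theorem stmt11_general (p : ℕ) (hp : p.Prime) (n : ℕ)
    (c : List ℕ) (hc : ∀ x ∈ c, 0 < x) (hsum : c.sum = n) (m : ℕ) :
    Nat.card {s : Fin c.length → ℕ // StrictMono s ∧
        m = ∑ i : Fin c.length, c.get i * p ^ (s i)} ≤ 2 ^ n := by
  have h := ncard_reps_mul_two_pow_digitSum_le hp.one_lt c.get (fun i => hc _ (c.get_mem i)) m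
  calc Nat.card {s : Fin c.length → ℕ // StrictMono s ∧
        m = ∑ i : Fin c.length, c.get i * p ^ (s i)}
      = (reps p c.get m).ncard := rfl
    _ ≤ (reps p c.get m).ncard * 2 ^ digitSum p m := Nat.le_mul_of_pos_right _ (by positivity)
    _ ≤ 2 ^ n := by rwa [← List.sum_ofFn, List.ofFn_get, hsum] at h

/-- for a prime `p`, a composition `c = (c_1, …, c_r)` of `n ≥ 1`
and a positive integer `m`, the number of strictly increasing tuples
`(s_1, …, s_r)` of nonnegative integers with `m = Σ c_i p^{s_i}` is at most `2^n`. -/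
theorem stmt11 (p : ℕ) (hp : p.Prime) (n : ℕ) (hn : 1 ≤ n)
    (c : List ℕ) (hc : ∀ x ∈ c, 0 < x) (hsum : c.sum = n) (m : ℕ) (hm : 1 ≤ m) :
    Nat.card {s : Fin c.length → ℕ // StrictMono s ∧
        m = ∑ i : Fin c.length, c.get i * p ^ (s i)} ≤ 2 ^ n :=
  stmt11_general p hp n c hc hsum m
end

section
/- Let p be a prime and n ≥ 1 an integer. Then for every positive integer m, the number p_{A,n}(m) of partitions of m into exactly n parts each of which is a power of p satisfies p_{A,n}(m) < e^{2πn/√3} · 2^n. -/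
/-!
Let `N(n, m)` count the multisets of `n` powers of `p` with sum `m`. Such a multiset either
contains a `1`, whose removal leaves one counted by `N(n - 1, m - 1)`, or consists of multiples
of `p` (so `p ∣ m`), and dividing by `p` leaves one counted by `N(n, m / p)`. With `s` the base-`p`
digit sum, induction along this recursion gives `N(n, m) ≤ 4 ^ n * w(m)` for the weight
`w(m) = 2 * 2⁻¹ ^ s(m) - 2⁻¹ ^ (s(m - 1) + 1)`: if `p ∤ m` then `s(m - 1) + 1 = s(m)`, and
`s(p * a - 1) = s(a - 1) + (p - 1)` makes the case `m = p * a` close. For `m ≥ 1` we have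
`s(m) ≥ 1`, hence `w(m) < 1` and `N(n, m) < 4 ^ n ≤ e ^ n * 2 ^ n`.
-/

open Multiset

namespace Nat

variable {p : ℕ}

theorem digits_sum_mul_add (hp : 1 < p) {d : ℕ} (hd : d < p) (a : ℕ) :
    (p.digits (p * a + d)).sum = d + (p.digits a).sum := by
  by_cases h : d = 0 ∧ a = 0
  · simp [h]
  · rw [add_comm, Nat.digits_add p hp d a hd (by tauto), List.sum_cons]

theorem digits_sum_mul (hp : 1 < p) (a : ℕ) : (p.digits (p * a)).sum = (p.digits a).sum := by
  simpa using digits_sum_mul_add hp (d := 0) (by omega) a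

theorem digits_sum_mul_sub_one (hp : 1 < p) {a : ℕ} (ha : a ≠ 0) :
    (p.digits (p * a - 1)).sum = p - 1 + (p.digits (a - 1)).sum := by
  obtain ⟨b, rfl⟩ := Nat.exists_eq_succ_of_ne_zero ha
  rw [show p * b.succ - 1 = p * b + (p - 1) by rw [Nat.mul_succ]; omega,
    digits_sum_mul_add hp (by omega), Nat.succ_sub_one]

theorem digits_sum_sub_one_add_one_of_not_dvd (hp : 1 < p) {m : ℕ} (hm : ¬ p ∣ m) :
    (p.digits (m - 1)).sum + 1 = (p.digits m).sum := by
  have hmod : m % p ≠ 0 := fun h => hm (Nat.dvd_of_mod_eq_zero h)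
  have hlt : m % p < p := Nat.mod_lt m (by omega)
  have hpred : m - 1 = p * (m / p) + (m % p - 1) := by
    have := Nat.div_add_mod m p
    omega
  conv_rhs => rw [← Nat.div_add_mod m p]
  rw [hpred, digits_sum_mul_add hp (by omega), digits_sum_mul_add hp hlt]
  omega

theorem digits_sum_le_digits_sum_sub_one_add_one (hp : 1 < p) (m : ℕ) :
    (p.digits m).sum ≤ (p.digits (m - 1)).sum + 1 := by
  induction m using Nat.strong_induction_on with
  | _ m ih =>
    by_cases hm : p ∣ m
    · obtain ⟨a, rfl⟩ := hm
      rcases eq_or_ne a 0 with rfl | ha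
      · simp
      have := ih a (lt_mul_left (Nat.pos_of_ne_zero ha) hp)
      rw [digits_sum_mul hp, digits_sum_mul_sub_one hp ha]
      omega
    · exact (digits_sum_sub_one_add_one_of_not_dvd hp hm).ge

theorem digits_sum_pos (hp : 1 < p) {m : ℕ} (hm : m ≠ 0) : 0 < (p.digits m).sum := by
  induction m using Nat.strong_induction_on with
  | _ m ih =>
    by_cases hdvd : p ∣ m
    · obtain ⟨a, rfl⟩ := hdvd
      have ha : a ≠ 0 := by rintro rfl; simp at hm
      rw [digits_sum_mul hp]
      exact ih a (lt_mul_left (Nat.pos_of_ne_zero ha) hp) ha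
    · rw [← digits_sum_sub_one_add_one_of_not_dvd hp hdvd]
      omega

end Nat

noncomputable def digitWeight (p m : ℕ) : ℝ :=
  2 * (1 / 2) ^ (p.digits m).sum - (1 / 2) ^ ((p.digits (m - 1)).sum + 1)

section DigitWeight

variable {p : ℕ}

theorem digitWeight_zero : digitWeight p 0 = 3 / 2 := by
  norm_num [digitWeight]

theorem digitWeight_le (m : ℕ) : digitWeight p m ≤ 2 * (1 / 2) ^ (p.digits m).sum := by
  unfold digitWeight
  linarith [pow_pos (by norm_num : (0 : ℝ) < 1 / 2) ((p.digits (m - 1)).sum + 1)]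

theorem digitWeight_nonneg (hp : 1 < p) (m : ℕ) : 0 ≤ digitWeight p m := by
  have : ((1 : ℝ) / 2) ^ ((p.digits (m - 1)).sum + 1) ≤ (1 / 2) ^ (p.digits m).sum :=
    pow_le_pow_of_le_one (by norm_num) (by norm_num)
      (Nat.digits_sum_le_digits_sum_sub_one_add_one hp m)
  unfold digitWeight
  linarith [pow_pos (by norm_num : (0 : ℝ) < 1 / 2) (p.digits m).sum]

theorem digitWeight_lt_one (hp : 1 < p) {m : ℕ} (hm : m ≠ 0) : digitWeight p m < 1 := by
  have : ((1 : ℝ) / 2) ^ (p.digits m).sum ≤ 1 / 2 :=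
    pow_le_of_le_one (by norm_num) (by norm_num) (Nat.digits_sum_pos hp hm).ne'
  unfold digitWeight
  linarith [pow_pos (by norm_num : (0 : ℝ) < 1 / 2) ((p.digits (m - 1)).sum + 1)]

theorem digitWeight_sub_one_le_of_not_dvd (hp : 1 < p) {m : ℕ} (hm : ¬ p ∣ m) :
    digitWeight p (m - 1) ≤ 4 * digitWeight p m := by
  have hw : digitWeight p m = (1 / 2) ^ ((p.digits (m - 1)).sum + 1) := by
    rw [digitWeight, ← Nat.digits_sum_sub_one_add_one_of_not_dvd hp hm]
    ring
  rw [hw, pow_succ]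
  linarith [digitWeight_le (p := p) (m - 1)]

theorem digitWeight_mul_sub_one_add_le (hp : 1 < p) {a : ℕ} (ha : a ≠ 0) :
    digitWeight p (p * a - 1) + 4 * digitWeight p a ≤ 4 * digitWeight p (p * a) := by
  have hpow : ((1 : ℝ) / 2) ^ (p.digits (p * a - 1)).sum ≤
      (1 / 2) ^ ((p.digits (a - 1)).sum + 1) :=
    pow_le_pow_of_le_one (by norm_num) (by norm_num)
      (by rw [Nat.digits_sum_mul_sub_one hp ha]; omega)
  have hle := digitWeight_le (p := p) (p * a - 1)
  unfold digitWeight at hle ⊢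
  rw [Nat.digits_sum_mul hp, pow_succ _ (p.digits (p * a - 1)).sum]
  linarith

end DigitWeight

def powPartitions (p n m : ℕ) : Set (Multiset ℕ) :=
  {s | card s = n ∧ s.sum = m ∧ ∀ x ∈ s, ∃ k, x = p ^ k}

section PowPartitions

variable {p n m : ℕ}

def partitionEquivPowPartitions (hp : p ≠ 0) (n m : ℕ) :
    {P : Nat.Partition m // card P.parts = n ∧ ∀ x ∈ P.parts, ∃ k : ℕ, x = p ^ k} ≃
      powPartitions p n m where
  toFun P := ⟨P.1.parts, P.2.1, P.1.parts_sum, P.2.2⟩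
  invFun s := ⟨⟨s.1, fun hx => by obtain ⟨k, rfl⟩ := s.2.2.2 _ hx; positivity, s.2.2.1⟩,
    s.2.1, s.2.2.2⟩
  left_inv _ := rfl
  right_inv _ := rfl

theorem powPartitions_finite (hp : p ≠ 0) (n m : ℕ) : (powPartitions p n m).Finite :=
  Set.finite_coe_iff.mp (.of_equiv _ (partitionEquivPowPartitions hp n m))

theorem powPartitions_zero_left (hm : m ≠ 0) : powPartitions p 0 m = ∅ := by
  ext s
  simp only [powPartitions, card_eq_zero, Set.mem_ofPred_eq, Set.mem_empty_iff_false, iff_false]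
  rintro ⟨rfl, rfl, -⟩
  exact hm sum_zero

theorem ncard_powPartitions_zero_right_le (hp : p ≠ 0) : (powPartitions p n 0).ncard ≤ 1 := by
  have hsub : powPartitions p n 0 ⊆ {0} := by
    rintro s ⟨-, hsum, hpow⟩
    refine eq_zero_of_forall_notMem fun x hx => ?_
    obtain ⟨k, rfl⟩ := hpow x hx
    exact pow_ne_zero k hp (sum_eq_zero_iff.mp hsum _ hx)
  exact (Set.ncard_le_ncard hsub).trans (Set.ncard_singleton 0).le

theorem erase_one_mem_powPartitions {s : Multiset ℕ} (hs : s ∈ powPartitions p (n + 1) m)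
    (h1 : 1 ∈ s) : s.erase 1 ∈ powPartitions p n (m - 1) := by
  obtain ⟨hcard, hsum, hpow⟩ := hs
  refine ⟨by rw [card_erase_of_mem h1, hcard]; rfl, ?_, fun x hx => hpow x (mem_of_mem_erase hx)⟩
  have := sum_erase h1
  omega

theorem exists_eq_map_mul_of_one_notMem (hp : p ≠ 0) {s : Multiset ℕ}
    (hs : s ∈ powPartitions p n m) (h1 : 1 ∉ s) :
    ∃ t ∈ powPartitions p n (m / p), s = t.map (p * ·) := by
  obtain ⟨hcard, hsum, hpow⟩ := hs
  have hexp : ∀ x ∈ s, ∃ k, x = p ^ (k + 1) := by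
    intro x hx
    obtain ⟨k, rfl⟩ := hpow x hx
    rcases k with _ | k
    · exact absurd (by simpa using hx) h1
    · exact ⟨k, rfl⟩
  have hmap : s = (s.map (· / p)).map (p * ·) := by
    rw [map_map]
    refine (map_congr rfl fun x hx => ?_).trans (map_id s) |>.symm
    obtain ⟨k, rfl⟩ := hexp x hx
    simp [pow_succ', Nat.mul_div_cancel_left _ (Nat.pos_of_ne_zero hp)]
  have hm : m = p * (s.map (· / p)).sum := by
    rw [← hsum]
    conv_lhs => rw [hmap]
    rw [sum_map_mul_left, map_id']
  refine ⟨s.map (· / p), ⟨by rw [card_map, hcard], ?_, ?_⟩, hmap⟩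
  · rw [hm, Nat.mul_div_cancel_left _ (Nat.pos_of_ne_zero hp)]
  · simp only [mem_map, forall_exists_index, and_imp]
    rintro _ x hx rfl
    obtain ⟨k, rfl⟩ := hexp x hx
    exact ⟨k, by rw [pow_succ', Nat.mul_div_cancel_left _ (Nat.pos_of_ne_zero hp)]⟩

theorem ncard_powPartitions_succ_le_of_not_dvd (hp : p ≠ 0) (hm : ¬ p ∣ m) :
    (powPartitions p (n + 1) m).ncard ≤ (powPartitions p n (m - 1)).ncard := by
  have hsub : powPartitions p (n + 1) m ⊆ (1 ::ₘ ·) '' powPartitions p n (m - 1) := by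
    intro s hs
    by_cases h1 : 1 ∈ s
    · exact ⟨s.erase 1, erase_one_mem_powPartitions hs h1, cons_erase h1⟩
    · obtain ⟨t, -, rfl⟩ := exists_eq_map_mul_of_one_notMem hp hs h1
      exact absurd ⟨t.sum, by rw [← hs.2.1, sum_map_mul_left, map_id']⟩ hm
  exact (Set.ncard_le_ncard hsub ((powPartitions_finite hp _ _).image _)).trans
    (Set.ncard_image_le (powPartitions_finite hp _ _))

theorem ncard_powPartitions_succ_mul_le (hp : p ≠ 0) (a : ℕ) :
    (powPartitions p (n + 1) (p * a)).ncard ≤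
      (powPartitions p n (p * a - 1)).ncard + (powPartitions p (n + 1) a).ncard := by
  have hsub : powPartitions p (n + 1) (p * a) ⊆
      (1 ::ₘ ·) '' powPartitions p n (p * a - 1) ∪ map (p * ·) '' powPartitions p (n + 1) a := by
    intro s hs
    by_cases h1 : 1 ∈ s
    · exact .inl ⟨s.erase 1, erase_one_mem_powPartitions hs h1, cons_erase h1⟩
    · obtain ⟨t, ht, rfl⟩ := exists_eq_map_mul_of_one_notMem hp hs h1
      rw [Nat.mul_div_cancel_left _ (Nat.pos_of_ne_zero hp)] at ht
      exact .inr ⟨t, ht, rfl⟩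
  have hfin := powPartitions_finite hp
  calc _ ≤ _ := Set.ncard_le_ncard hsub (((hfin _ _).image _).union ((hfin _ _).image _))
    _ ≤ _ := Set.ncard_union_le _ _
    _ ≤ _ := add_le_add (Set.ncard_image_le (hfin _ _)) (Set.ncard_image_le (hfin _ _))

end PowPartitions

theorem ncard_powPartitions_le {p : ℕ} (hp : 1 < p) (n m : ℕ) :
    ((powPartitions p n m).ncard : ℝ) ≤ 4 ^ n * digitWeight p m := by
  induction m using Nat.strong_induction_on generalizing n with
  | _ m ih =>
    rcases eq_or_ne m 0 with rfl | hm
    · have hcard : ((powPartitions p n 0).ncard : ℝ) ≤ 1 := by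
        exact_mod_cast ncard_powPartitions_zero_right_le (by omega)
      rw [digitWeight_zero]
      nlinarith [one_le_pow₀ (n := n) (by norm_num : (1 : ℝ) ≤ 4)]
    cases n with
    | zero => simpa [powPartitions_zero_left hm] using digitWeight_nonneg hp m
    | succ n =>
      by_cases hdvd : p ∣ m
      · obtain ⟨a, rfl⟩ := hdvd
        have ha : a ≠ 0 := by rintro rfl; simp at hm
        calc ((powPartitions p (n + 1) (p * a)).ncard : ℝ)
            ≤ (powPartitions p n (p * a - 1)).ncard + (powPartitions p (n + 1) a).ncard := by
              exact_mod_cast ncard_powPartitions_succ_mul_le (by omega) a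
          _ ≤ 4 ^ n * digitWeight p (p * a - 1) + 4 ^ (n + 1) * digitWeight p a :=
              add_le_add (ih _ (by omega) n) (ih a (lt_mul_left (by omega) hp) (n + 1))
          _ ≤ 4 ^ (n + 1) * digitWeight p (p * a) := by
              rw [pow_succ, mul_assoc, mul_assoc, ← mul_add]
              gcongr
              linarith [digitWeight_mul_sub_one_add_le hp ha]
      · calc ((powPartitions p (n + 1) m).ncard : ℝ) ≤ (powPartitions p n (m - 1)).ncard := by
              exact_mod_cast ncard_powPartitions_succ_le_of_not_dvd (by omega) hdvd
          _ ≤ 4 ^ n * digitWeight p (m - 1) := ih _ (by omega) n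
          _ ≤ 4 ^ (n + 1) * digitWeight p m := by
              rw [pow_succ, mul_assoc]
              gcongr
              linarith [digitWeight_sub_one_le_of_not_dvd hp hdvd]

theorem two_pow_le_exp (n : ℕ) : (2 : ℝ) ^ n ≤ Real.exp (2 * Real.pi * n / Real.sqrt 3) := by
  have hsqrt : Real.sqrt 3 < 2 := by
    rw [Real.sqrt_lt' (by norm_num)]
    norm_num
  have hc : 1 ≤ 2 * Real.pi / Real.sqrt 3 := by
    rw [one_le_div (by positivity)]
    linarith [Real.pi_gt_three]
  calc (2 : ℝ) ^ n ≤ Real.exp 1 ^ n := by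
        gcongr
        linarith [Real.add_one_le_exp 1]
    _ ≤ Real.exp (2 * Real.pi / Real.sqrt 3) ^ n := by gcongr
    _ = Real.exp (2 * Real.pi * n / Real.sqrt 3) := by
        rw [← Real.exp_nat_mul]
        ring_nf

theorem stmt12_general (p : ℕ) (hp : p.Prime) (n : ℕ) (m : ℕ) (hm : 1 ≤ m) :
    (Nat.card {P : Nat.Partition m //
        Multiset.card P.parts = n ∧ ∀ x ∈ P.parts, ∃ k : ℕ, x = p ^ k} : ℝ) <
      Real.exp (2 * Real.pi * n / Real.sqrt 3) * 2 ^ n := by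
  rw [Nat.card_congr (partitionEquivPowPartitions hp.ne_zero n m), Nat.card_coe_set_eq]
  calc _ ≤ 4 ^ n * digitWeight p m := ncard_powPartitions_le hp.one_lt n m
    _ < 4 ^ n := mul_lt_of_lt_one_right (by positivity) (digitWeight_lt_one hp.one_lt (by omega))
    _ = 2 ^ n * 2 ^ n := by rw [← mul_pow]; norm_num
    _ ≤ Real.exp (2 * Real.pi * n / Real.sqrt 3) * 2 ^ n := by gcongr; exact two_pow_le_exp n

/-- for a prime `p` and `n ≥ 1`, the number of partitions of `m ≥ 1` into
exactly `n` parts each of which is a power of `p` is `< e^{2πn/√3} · 2^n`. -/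
theorem stmt12 (p : ℕ) (hp : p.Prime) (n : ℕ) (hn : 1 ≤ n) (m : ℕ) (hm : 1 ≤ m) :
    (Nat.card {P : Nat.Partition m //
        Multiset.card P.parts = n ∧ ∀ x ∈ P.parts, ∃ k : ℕ, x = p ^ k} : ℝ) <
      Real.exp (2 * Real.pi * n / Real.sqrt 3) * 2 ^ n :=
  stmt12_general p hp n m hm
end
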